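/- arXiv:1910.08752 — 7 statements merged into one kernel-verified Lean document; each statement's English description precedes it below -/
import Mathlib

section
/- Let G be a connected graph with τ(G) ≤ 1/2 (in particular, G is noncomplete). Then τ(B(G)) = 2·τ(G). -/
open SimpleGraph
open scoped ENNReal

namespace Toughness

variable {V : Type*}

/-- Number of connected components of the graph obtained from `G` by deleting the vertex set `S`. -/
noncomputable def numComp (G : SimpleGraph V) (S : Set V) : ℕ :=
  Nat.card (G.induce Sᶜ).ConnectedComponent

/-- `S` is a cutset of `G`: deleting it leaves more than one connected component. -/
def IsCutset (G : SimpleGraph V) (S : Set V) : Prop :=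
  1 < numComp G S

/-- `G` is `t`-tough: every cutset `S` satisfies `t · ω(G−S) ≤ |S|`. -/
def IsTough (t : ℝ) (G : SimpleGraph V) : Prop :=
  ∀ S : Set V, IsCutset G S → t * (numComp G S : ℝ) ≤ (S.ncard : ℝ)

/-- The toughness of `G`: the infimum of `|S| / ω(G−S)` over all cutsets `S`,
with value `∞` when there is no cutset (e.g. for complete graphs). -/
noncomputable def toughness (G : SimpleGraph V) : ℝ≥0∞ :=
  ⨅ (S : Set V) (_ : IsCutset G S), (S.ncard : ℝ≥0∞) / (numComp G S : ℝ≥0∞)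

/-- The bipartite graph `B(G)`: two copies `(v, false)` and `(v, true)` of every vertex `v` of
`G`, with `(u, false)` adjacent to `(v, true)` if and only if `u = v` or `uv ∈ E(G)`. -/
def BGraph (G : SimpleGraph V) : SimpleGraph (V × Bool) :=
  SimpleGraph.fromRel (fun p q => p.2 ≠ q.2 ∧ (p.1 = q.1 ∨ G.Adj p.1 q.1))

lemma bgraph_adj (G : SimpleGraph V) (p q : V × Bool) :
    (BGraph G).Adj p q ↔ p.2 ≠ q.2 ∧ (p.1 = q.1 ∨ G.Adj p.1 q.1) := by
  rw [BGraph, fromRel_adj]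
  constructor
  · rintro ⟨hne, h | h⟩
    · exact h
    · exact ⟨h.1.symm, h.2.imp Eq.symm G.adj_symm⟩
  · intro h
    refine ⟨fun he => h.1 (by rw [he]), Or.inl h⟩

/-- projection of reachability in `B(G) - T` to `G - S` when `T`-survivors project
outside `S`. -/
lemma proj_reach (G : SimpleGraph V) {S : Set V} {T : Set (V × Bool)}
    (hTS : ∀ p : V × Bool, p ∉ T → p.1 ∉ S) {x y : ↥Tᶜ}
    (h : ((BGraph G).induce Tᶜ).Reachable x y) :
    (G.induce Sᶜ).Reachable ⟨x.1.1, hTS _ x.2⟩ ⟨y.1.1, hTS _ y.2⟩ := by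
  obtain ⟨p⟩ := h
  induction p with
  | nil => exact Reachable.refl _
  | @cons a b c hab p ih =>
    have hadj : (BGraph G).Adj a.1 b.1 := hab
    rw [bgraph_adj] at hadj
    rcases hadj.2 with h1 | h1
    · have : (⟨a.1.1, hTS _ a.2⟩ : ↥Sᶜ) = ⟨b.1.1, hTS _ b.2⟩ := Subtype.ext h1
      rw [this]; exact ih
    · exact (Adj.reachable (by exact h1 : (G.induce Sᶜ).Adj ⟨a.1.1, hTS _ a.2⟩ ⟨b.1.1, hTS _ b.2⟩)).trans ih

noncomputable def projC (G : SimpleGraph V) {S : Set V} {T : Set (V × Bool)}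
    (hTS : ∀ p : V × Bool, p ∉ T → p.1 ∉ S) :
    ((BGraph G).induce Tᶜ).ConnectedComponent → (G.induce Sᶜ).ConnectedComponent :=
  Quot.lift (fun x => (G.induce Sᶜ).connectedComponentMk ⟨x.1.1, hTS _ x.2⟩)
    (fun _ _ h => ConnectedComponent.sound (proj_reach G hTS h))

@[simp] lemma projC_mk (G : SimpleGraph V) {S : Set V} {T : Set (V × Bool)}
    (hTS : ∀ p : V × Bool, p ∉ T → p.1 ∉ S) (x : ↥Tᶜ) :
    projC G hTS (((BGraph G).induce Tᶜ).connectedComponentMk x)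
      = (G.induce Sᶜ).connectedComponentMk ⟨x.1.1, hTS _ x.2⟩ := rfl

/-- lifting reachability from `G - S` to `B(G) - S×Bool`. -/
lemma lift_reach (G : SimpleGraph V) {S : Set V} {u w : ↥Sᶜ}
    (h : (G.induce Sᶜ).Reachable u w) (i j : Bool) :
    ((BGraph G).induce (Prod.fst ⁻¹' S)ᶜ).Reachable ⟨(u.1, i), u.2⟩ ⟨(w.1, j), w.2⟩ := by
  obtain ⟨p⟩ := h
  induction p generalizing i with
  | nil =>
    rcases eq_or_ne i j with rfl | hij
    · exact Reachable.refl _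
    · refine Adj.reachable ?_
      show (BGraph G).Adj _ _
      rw [bgraph_adj]
      exact ⟨by simpa using hij, Or.inl rfl⟩
  | @cons a b c hab p ih =>
    have hadj : G.Adj a.1 b.1 := hab
    have : ((BGraph G).induce (Prod.fst ⁻¹' S)ᶜ).Adj ⟨(a.1, i), a.2⟩ ⟨(b.1, !i), b.2⟩ := by
      show (BGraph G).Adj _ _
      rw [bgraph_adj]
      exact ⟨by simp, Or.inr hadj⟩
    exact (Adj.reachable this).trans (ih (!i))

lemma numComp_symm (G : SimpleGraph V) (S : Set V) :
    numComp (BGraph G) (Prod.fst ⁻¹' S) = numComp G S := by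
  have hTS : ∀ p : V × Bool, p ∉ (Prod.fst ⁻¹' S) → p.1 ∉ S := fun p hp => hp
  apply Nat.card_eq_of_bijective (projC G hTS)
  constructor
  · intro C C'
    refine ConnectedComponent.ind₂ (fun x y h => ?_) C C'
    have hr := ConnectedComponent.exact h
    have := lift_reach G hr x.1.2 y.1.2
    exact ConnectedComponent.sound this
  · intro C
    refine ConnectedComponent.ind (fun v => ?_) C
    exact ⟨((BGraph G).induce (Prod.fst ⁻¹' S)ᶜ).connectedComponentMk ⟨(v.1, false), v.2⟩, rfl⟩

lemma ncard_preimage (S : Set V) :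
    (Prod.fst ⁻¹' S : Set (V × Bool)).ncard = 2 * S.ncard := by
  have e : ↥(Prod.fst ⁻¹' S : Set (V × Bool)) ≃ Bool × ↥S :=
    { toFun := fun x => (x.1.2, ⟨x.1.1, x.2⟩)
      invFun := fun p => ⟨(p.2.1, p.1), p.2.2⟩
      left_inv := by rintro ⟨⟨v, i⟩, h⟩; rfl
      right_inv := by rintro ⟨i, v⟩; rfl }
  rw [← Nat.card_coe_set_eq, Nat.card_congr e, Nat.card_prod, ← Nat.card_coe_set_eq]
  simp [Nat.card_eq_fintype_card]

def Aset (T : Set (V × Bool)) : Set V := {v | (v, false) ∈ T ∧ (v, true) ∈ T}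

def Dset (T : Set (V × Bool)) : Set V :=
  {v | v ∉ Aset T ∧ ((v, false) ∈ T ∨ (v, true) ∈ T)}

lemma f0 (T : Set (V × Bool)) : ∀ p : V × Bool, p ∉ T → p.1 ∉ Aset T := by
  rintro ⟨v, i⟩ hp hvA
  cases i
  · exact hp hvA.1
  · exact hp hvA.2

lemma notT_of_notD {T : Set (V × Bool)} {v : V} (hvA : v ∉ Aset T) (hvD : v ∉ Dset T) :
    ∀ i, (v, i) ∉ T := by
  intro i hin
  cases i
  · exact hvD ⟨hvA, Or.inl hin⟩
  · exact hvD ⟨hvA, Or.inr hin⟩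

open scoped Classical in
noncomputable def gfun (G : SimpleGraph V) (T : Set (V × Bool)) (v : ↥(Aset T)ᶜ) :
    ((BGraph G).induce Tᶜ).ConnectedComponent :=
  if h : (v.1, false) ∈ T then
    ((BGraph G).induce Tᶜ).connectedComponentMk ⟨(v.1, true), fun h' => v.2 ⟨h, h'⟩⟩
  else ((BGraph G).induce Tᶜ).connectedComponentMk ⟨(v.1, false), h⟩

lemma gfun_mk (G : SimpleGraph V) (T : Set (V × Bool)) (x : ↥Tᶜ) :
    gfun G T ⟨x.1.1, f0 T _ x.2⟩ = ((BGraph G).induce Tᶜ).connectedComponentMk x := by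
  obtain ⟨⟨v, i⟩, hx⟩ := x
  by_cases h : (v, false) ∈ T
  · cases i
    · exact absurd h hx
    · simp only [gfun, dif_pos h]
  · cases i
    · simp only [gfun, dif_neg h]
    · simp only [gfun, dif_neg h]
      refine ConnectedComponent.sound (Adj.reachable ?_)
      show (BGraph G).Adj (v, false) (v, true)
      rw [bgraph_adj]
      simp

lemma gfun_edge (G : SimpleGraph V) (T : Set (V × Bool)) {u w : ↥(Aset T)ᶜ}
    (hadj : (G.induce (Aset T)ᶜ).Adj u w) (hne : gfun G T u ≠ gfun G T w) :
    u.1 ∈ Dset T := by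
  by_contra hD
  have hc : ∀ i, (u.1, i) ∉ T := notT_of_notD u.2 hD
  have hG : G.Adj u.1 w.1 := hadj
  obtain ⟨j, hwj⟩ : ∃ j, (w.1, j) ∉ T := by
    by_cases hwf : (w.1, false) ∈ T
    · exact ⟨true, fun h' => w.2 ⟨hwf, h'⟩⟩
    · exact ⟨false, hwf⟩
  have h1 : gfun G T w = ((BGraph G).induce Tᶜ).connectedComponentMk ⟨(w.1, j), hwj⟩ :=
    gfun_mk G T ⟨(w.1, j), hwj⟩
  have h2 : gfun G T u = ((BGraph G).induce Tᶜ).connectedComponentMk ⟨(u.1, !j), hc (!j)⟩ :=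
    gfun_mk G T ⟨(u.1, !j), hc (!j)⟩
  have h3 : ((BGraph G).induce Tᶜ).connectedComponentMk ⟨(u.1, !j), hc (!j)⟩
      = ((BGraph G).induce Tᶜ).connectedComponentMk ⟨(w.1, j), hwj⟩ := by
    refine ConnectedComponent.sound (Adj.reachable ?_)
    show (BGraph G).Adj (u.1, !j) (w.1, j)
    rw [bgraph_adj]
    exact ⟨by simp, Or.inr hG⟩
  exact hne (h2.trans (h3.trans h1.symm))

lemma walk_change {α : Type*} {β : Type*} {H : SimpleGraph α} (g : α → β) :
    ∀ {u w : α}, H.Walk u w → g u ≠ g w →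
      ∃ v1 v2, H.Adj v1 v2 ∧ g v1 = g u ∧ g v2 ≠ g u := by
  intro u w p
  induction p with
  | nil => intro h; exact absurd rfl h
  | @cons a b c hab p ih =>
    intro h
    by_cases hb : g b = g a
    · obtain ⟨v1, v2, h1, h2, h3⟩ := ih (fun hh => h (hb.symm.trans hh))
      exact ⟨v1, v2, h1, h2.trans hb, fun hh => h3 (hh.trans hb.symm)⟩
    · exact ⟨a, b, hab, rfl, hb⟩

lemma proj_eq_of_missD (G : SimpleGraph V) (T : Set (V × Bool))
    {C C' : ((BGraph G).induce Tᶜ).ConnectedComponent}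
    (hmiss : ∀ v : ↥(Aset T)ᶜ, gfun G T v = C → v.1 ∉ Dset T)
    (hCC : projC G (f0 T) C = projC G (f0 T) C') : C = C' := by
  obtain ⟨x, hx⟩ := C.exists_rep
  obtain ⟨y, hy⟩ := C'.exists_rep
  have hgu : gfun G T ⟨x.1.1, f0 T _ x.2⟩ = C := by rw [gfun_mk]; exact hx
  have hgw : gfun G T ⟨y.1.1, f0 T _ y.2⟩ = C' := by rw [gfun_mk]; exact hy
  rw [← hx, ← hy] at hCC
  have hr := ConnectedComponent.exact hCC
  obtain ⟨p⟩ := hr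
  by_cases hgg : gfun G T ⟨x.1.1, f0 T _ x.2⟩ = gfun G T ⟨y.1.1, f0 T _ y.2⟩
  · rw [← hgu, ← hgw]; exact hgg
  · obtain ⟨v1, v2, h1, h2, h3⟩ := walk_change (gfun G T) p hgg
    exact absurd (gfun_edge G T h1 (fun hh => h3 (hh.symm.trans h2)))
      (hmiss v1 (h2.trans hgu))

lemma card_T (T : Set (V × Bool)) [Fintype V] :
    2 * (Aset T).ncard + (Dset T).ncard ≤ T.ncard := by
  classical
  have hunion : T = (Prod.fst ⁻¹' (Aset T)) ∪ (T ∩ {p | p.1 ∉ Aset T}) := by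
    ext ⟨v, i⟩
    constructor
    · intro hin
      by_cases hA : v ∈ Aset T
      · exact Or.inl hA
      · exact Or.inr ⟨hin, hA⟩
    · rintro (hA | h)
      · cases i
        · exact hA.1
        · exact hA.2
      · exact h.1
  have hdisj : Disjoint (Prod.fst ⁻¹' (Aset T)) (T ∩ {p | p.1 ∉ Aset T}) := by
    rw [Set.disjoint_left]
    rintro p hp ⟨_, hp2⟩
    exact hp2 hp
  have himg : Prod.fst '' (T ∩ {p | p.1 ∉ Aset T}) = Dset T := by
    ext v
    constructor
    · rintro ⟨⟨w, i⟩, ⟨hwT, hwA⟩, rfl⟩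
      refine ⟨hwA, ?_⟩
      cases i
      · exact Or.inl hwT
      · exact Or.inr hwT
    · rintro ⟨hvA, hv | hv⟩
      · exact ⟨(v, false), ⟨hv, hvA⟩, rfl⟩
      · exact ⟨(v, true), ⟨hv, hvA⟩, rfl⟩
  have hinj : Set.InjOn Prod.fst (T ∩ {p | p.1 ∉ Aset T}) := by
    rintro ⟨pv, pi⟩ hp ⟨qv, qi⟩ hq h
    simp only at h
    subst h
    cases pi <;> cases qi
    · rfl
    · exact absurd (⟨hp.1, hq.1⟩ : pv ∈ Aset T) hp.2
    · exact absurd (⟨hq.1, hp.1⟩ : pv ∈ Aset T) hp.2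
    · rfl
  have h2 : (T ∩ {p | p.1 ∉ Aset T}).ncard = (Dset T).ncard := by
    rw [← himg, Set.ncard_image_of_injOn hinj]
  have : T.ncard = 2 * (Aset T).ncard + (Dset T).ncard := by
    conv_lhs => rw [hunion]
    rw [Set.ncard_union_eq hdisj (Set.toFinite _) (Set.toFinite _), ncard_preimage, h2]
  exact this.ge

lemma key [Fintype V] (G : SimpleGraph V) (T : Set (V × Bool))
    (hT : IsCutset (BGraph G) T) {t : ℝ≥0∞} (ht2 : 2 * t ≤ 1)
    (htS : ∀ S : Set V, IsCutset G S → t * (numComp G S : ℝ≥0∞) ≤ (S.ncard : ℝ≥0∞)) :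
    2 * t * (numComp (BGraph G) T : ℝ≥0∞) ≤ (T.ncard : ℝ≥0∞) := by
  classical
  have hk2 : 2 ≤ numComp (BGraph G) T := hT
  have hcard := card_T T
  have hcard' : ((2 * (Aset T).ncard + (Dset T).ncard : ℕ) : ℝ≥0∞) ≤ (T.ncard : ℝ≥0∞) :=
    Nat.cast_le.mpr hcard
  by_cases hq : 2 ≤ numComp G (Aset T)
  · -- A is a cutset; injection into D ⊕ components of G − A
    have hkle : numComp (BGraph G) T ≤ (Dset T).ncard + numComp G (Aset T) := by
      let Φ : ((BGraph G).induce Tᶜ).ConnectedComponent →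
          ↥(Dset T) ⊕ (G.induce (Aset T)ᶜ).ConnectedComponent := fun C =>
        if h : ∃ v : ↥(Aset T)ᶜ, gfun G T v = C ∧ v.1 ∈ Dset T then
          Sum.inl ⟨(Classical.choose h).1, (Classical.choose_spec h).2⟩
        else Sum.inr (projC G (f0 T) C)
      have hΦ : Function.Injective Φ := by
        intro C C' h
        by_cases h1 : ∃ v : ↥(Aset T)ᶜ, gfun G T v = C ∧ v.1 ∈ Dset T <;>
          by_cases h2 : ∃ v : ↥(Aset T)ᶜ, gfun G T v = C' ∧ v.1 ∈ Dset T
        · simp only [Φ, dif_pos h1, dif_pos h2] at h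
          have hv := Sum.inl.inj h
          have hv' : (Classical.choose h1).1 = (Classical.choose h2).1 := by
            have := congrArg Subtype.val hv; simpa using this
          have hveq : Classical.choose h1 = Classical.choose h2 := Subtype.ext hv'
          rw [← (Classical.choose_spec h1).1, ← (Classical.choose_spec h2).1, hveq]
        · simp only [Φ, dif_pos h1, dif_neg h2] at h
          exact absurd h (by simp)
        · simp only [Φ, dif_neg h1, dif_pos h2] at h
          exact absurd h (by simp)
        · simp only [Φ, dif_neg h1, dif_neg h2] at h
          exact proj_eq_of_missD G T (fun v hv hvD => h1 ⟨v, hv, hvD⟩) (Sum.inr.inj h)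
      calc numComp (BGraph G) T
          ≤ Nat.card (↥(Dset T) ⊕ (G.induce (Aset T)ᶜ).ConnectedComponent) :=
            Nat.card_le_card_of_injective Φ hΦ
        _ = (Dset T).ncard + numComp G (Aset T) := by
            rw [Nat.card_sum, Nat.card_coe_set_eq, numComp]
    have h1 : t * (numComp G (Aset T) : ℝ≥0∞) ≤ ((Aset T).ncard : ℝ≥0∞) := htS _ hq
    calc 2 * t * (numComp (BGraph G) T : ℝ≥0∞)
        ≤ 2 * t * (((Dset T).ncard : ℝ≥0∞) + (numComp G (Aset T) : ℝ≥0∞)) := by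
          refine mul_le_mul_right ?_ _
          exact_mod_cast Nat.cast_le.mpr hkle
      _ = (2 * t) * ((Dset T).ncard : ℝ≥0∞) + 2 * (t * (numComp G (Aset T) : ℝ≥0∞)) := by
          ring
      _ ≤ 1 * ((Dset T).ncard : ℝ≥0∞) + 2 * ((Aset T).ncard : ℝ≥0∞) := by
          exact add_le_add (mul_le_mul_left ht2 _) (mul_le_mul_right h1 2)
      _ ≤ (T.ncard : ℝ≥0∞) := by
          rw [one_mul]
          calc ((Dset T).ncard : ℝ≥0∞) + 2 * ((Aset T).ncard : ℝ≥0∞)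
              = ((2 * (Aset T).ncard + (Dset T).ncard : ℕ) : ℝ≥0∞) := by push_cast; ring
            _ ≤ _ := hcard'
  · -- G − A has at most one component
    have hq1 : numComp G (Aset T) ≤ 1 := by omega
    have hsub : Subsingleton (G.induce (Aset T)ᶜ).ConnectedComponent :=
      Finite.card_le_one_iff_subsingleton.mp hq1
    have hmeet : ∀ C : ((BGraph G).induce Tᶜ).ConnectedComponent,
        ∃ v : ↥(Aset T)ᶜ, gfun G T v = C ∧ v.1 ∈ Dset T := by
      by_contra hcon
      push_neg at hcon
      obtain ⟨C, hC⟩ := hcon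
      have hall : ∀ C', C = C' := fun C' =>
        proj_eq_of_missD G T (fun v hv => hC v hv) (Subsingleton.elim _ _)
      have : Subsingleton ((BGraph G).induce Tᶜ).ConnectedComponent :=
        ⟨fun a b => (hall a).symm.trans (hall b)⟩
      have hle : numComp (BGraph G) T ≤ 1 := Finite.card_le_one_iff_subsingleton.mpr this
      omega
    have hkle : numComp (BGraph G) T ≤ (Dset T).ncard := by
      let Φ : ((BGraph G).induce Tᶜ).ConnectedComponent → ↥(Dset T) := fun C =>
        ⟨(Classical.choose (hmeet C)).1, (Classical.choose_spec (hmeet C)).2⟩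
      have hΦ : Function.Injective Φ := by
        intro C C' h
        simp only [Φ] at h
        have hv' : (Classical.choose (hmeet C)).1 = (Classical.choose (hmeet C')).1 := by
          have := congrArg Subtype.val h; simpa using this
        have hveq : Classical.choose (hmeet C) = Classical.choose (hmeet C') :=
          Subtype.ext hv'
        rw [← (Classical.choose_spec (hmeet C)).1, ← (Classical.choose_spec (hmeet C')).1, hveq]
      calc numComp (BGraph G) T ≤ Nat.card ↥(Dset T) := Nat.card_le_card_of_injective Φ hΦ
        _ = (Dset T).ncard := Nat.card_coe_set_eq _
    calc 2 * t * (numComp (BGraph G) T : ℝ≥0∞)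
        ≤ 1 * (numComp (BGraph G) T : ℝ≥0∞) := mul_le_mul_left ht2 _
      _ = (numComp (BGraph G) T : ℝ≥0∞) := one_mul _
      _ ≤ ((Dset T).ncard : ℝ≥0∞) := Nat.cast_le.mpr hkle
      _ ≤ ((2 * (Aset T).ncard + (Dset T).ncard : ℕ) : ℝ≥0∞) := by
          push_cast; exact le_add_self
      _ ≤ (T.ncard : ℝ≥0∞) := hcard'

/-- Let `G` be a connected graph with `τ(G) ≤ 1/2` (in particular, `G` is
noncomplete). Then `τ(B(G)) = 2·τ(G)`. -/
theorem stmt_4 {V : Type*} [Fintype V] (G : SimpleGraph V)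
    (hconn : G.Connected) (ht : toughness G ≤ 1 / 2) :
    toughness (BGraph G) = 2 * toughness G := by
  classical
  have hex : ∃ S : Set V, IsCutset G S := by
    by_contra hno
    push_neg at hno
    have htop : toughness G = ⊤ := by
      rw [toughness]
      simp [hno]
    rw [htop] at ht
    exact absurd ht (by simp [ENNReal.div_eq_top])
  haveI : Nonempty {S : Set V // IsCutset G S} := ⟨⟨hex.choose, hex.choose_spec⟩⟩
  obtain ⟨S0, hmin⟩ := Finite.exists_min
    (fun S : {S : Set V // IsCutset G S} => ((S.1.ncard : ℝ≥0∞) / (numComp G S.1 : ℝ≥0∞)))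
  have htG : toughness G = (S0.1.ncard : ℝ≥0∞) / (numComp G S0.1 : ℝ≥0∞) :=
    le_antisymm (iInf₂_le S0.1 S0.2) (le_iInf₂ fun S hS => hmin ⟨S, hS⟩)
  have hcut : IsCutset (BGraph G) (Prod.fst ⁻¹' S0.1) := by
    unfold IsCutset
    rw [numComp_symm]
    exact S0.2
  have hupper : toughness (BGraph G) ≤ 2 * toughness G := by
    calc toughness (BGraph G)
        ≤ ((Prod.fst ⁻¹' S0.1 : Set (V × Bool)).ncard : ℝ≥0∞)
            / (numComp (BGraph G) (Prod.fst ⁻¹' S0.1) : ℝ≥0∞) := iInf₂_le _ hcut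
      _ = ((2 * S0.1.ncard : ℕ) : ℝ≥0∞) / (numComp G S0.1 : ℝ≥0∞) := by
          rw [ncard_preimage, numComp_symm]
      _ = 2 * ((S0.1.ncard : ℝ≥0∞) / (numComp G S0.1 : ℝ≥0∞)) := by
          push_cast
          rw [mul_div_assoc]
      _ = 2 * toughness G := by rw [htG]
  have ht2 : 2 * toughness G ≤ 1 := by
    calc 2 * toughness G ≤ 2 * (1 / 2) := mul_le_mul_right ht 2
      _ = 1 := by
          rw [one_div, ENNReal.mul_inv_cancel (by norm_num) (by norm_num)]
  have htS : ∀ S : Set V, IsCutset G S →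
      toughness G * (numComp G S : ℝ≥0∞) ≤ (S.ncard : ℝ≥0∞) := by
    intro S hS
    have hle : toughness G ≤ (S.ncard : ℝ≥0∞) / (numComp G S : ℝ≥0∞) := iInf₂_le S hS
    have hk : 1 < numComp G S := hS
    have hq0 : (numComp G S : ℝ≥0∞) ≠ 0 := Nat.cast_ne_zero.mpr (by omega)
    have hqt : (numComp G S : ℝ≥0∞) ≠ ⊤ := ENNReal.natCast_ne_top _
    calc toughness G * (numComp G S : ℝ≥0∞)
        ≤ ((S.ncard : ℝ≥0∞) / (numComp G S : ℝ≥0∞)) * (numComp G S : ℝ≥0∞) :=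
          mul_le_mul_left hle _
      _ = (S.ncard : ℝ≥0∞) := ENNReal.div_mul_cancel hq0 hqt
  have hlower : 2 * toughness G ≤ toughness (BGraph G) := by
    rw [toughness]
    refine le_iInf₂ fun T hT => ?_
    have hk : 1 < numComp (BGraph G) T := hT
    rw [ENNReal.le_div_iff_mul_le (Or.inl (Nat.cast_ne_zero.mpr (by omega)))
      (Or.inl (ENNReal.natCast_ne_top _))]
    exact key G T hT ht2 htS
  exact le_antisymm hupper hlower

end Toughness
end

section
/- Let t be a real number with 0 < t ≤ 1/2 and let G be a connected t-tough graph. Then the graph B(G) is 2t-tough, i.e., ω(B(G)−S') ≤ |S'|/(2t) holds for every cutset S' of B(G). -/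
/-!
Write `W` for the vertices of `G` with both copies in `S'` and `H` for those with exactly one,
so that `|S'| = 2|W| + |H|`. A vertex of `H` has a single surviving copy, so at most `|H|`
components of `B(G) − S'` contain a copy of a vertex of `H`. Call the other components full.
A full component contains both copies of each of its base vertices, and every copy of a
`G`-neighbour is adjacent to one of them; walking along `G − W` it therefore swallows every
surviving vertex above a whole component of `G − W`. Hence full components inject into the
components of `G − W`, at most `|W| / t` of them when `W` is a cutset, while if `W` is not a
cutset a full component would be all of `B(G) − S'`. Either way
`2t · ω(B(G) − S') ≤ 2t|H| + 2|W| ≤ |S'|`.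
-/

open SimpleGraph
open scoped ENNReal

namespace Toughness

variable {V : Type*}

section BipartiteDouble

variable (S' : Set (V × Bool))

def bothCopies : Set V := {v | ∀ b, (v, b) ∈ S'}

def oneCopy : Set V := {v | ∃ b, (v, b) ∈ S'} \ bothCopies S'

open Classical in
lemma ncard_eq_two_mul_ncard_bothCopies_add [Fintype V] :
    S'.ncard = 2 * (bothCopies S').ncard + (oneCopy S').ncard := by
  simp only [Set.ncard_eq_toFinset_card', ← Set.filter_mem_univ_eq_toFinset, Finset.card_filter]
  rw [Fintype.sum_prod_type, Finset.mul_sum, ← Finset.sum_add_distrib]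
  refine Finset.sum_congr rfl fun v _ => ?_
  rw [Fintype.sum_bool]
  by_cases h₀ : (v, false) ∈ S' <;> by_cases h₁ : (v, true) ∈ S' <;>
    simp [bothCopies, oneCopy, Bool.forall_bool, Bool.exists_bool, h₀, h₁]

variable {S'}

lemma forall_notMem_of_notMem_oneCopy {v : V} (hW : v ∉ bothCopies S') (hH : v ∉ oneCopy S')
    (b : Bool) : (v, b) ∉ S' :=
  fun h => hH ⟨⟨b, h⟩, hW⟩

lemma fst_notMem_bothCopies (p : ↥S'ᶜ) : p.1.1 ∉ bothCopies S' :=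
  fun h => p.2 (h p.1.2)

def baseVertex (p : ↥S'ᶜ) : ↥(bothCopies S')ᶜ :=
  ⟨p.1.1, fst_notMem_bothCopies p⟩

lemma eq_of_fst_eq_of_mem_oneCopy {p q : ↥S'ᶜ} (h : p.1.1 = q.1.1) (hp : p.1.1 ∈ oneCopy S') :
    p = q := by
  obtain ⟨⟨b, hb⟩, -⟩ := hp
  have hpb : p.1.2 ≠ b := fun e => p.2 (by subst e; exact hb)
  have hqb : q.1.2 ≠ b := fun e => q.2 (by subst e; rwa [h] at hb)
  exact Subtype.ext (Prod.ext h (by cases b <;> simp_all))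

end BipartiteDouble

lemma bGraph_adj {G : SimpleGraph V} {p q : V × Bool} :
    (BGraph G).Adj p q ↔ p.2 ≠ q.2 ∧ (p.1 = q.1 ∨ G.Adj p.1 q.1) := by
  rw [BGraph, fromRel_adj]
  grind [G.adj_comm]

section Components

variable {G : SimpleGraph V} {S' : Set (V × Bool)}

lemma mk_eq_mk_of_fst_eq {p q : ↥S'ᶜ} (h : p.1.1 = q.1.1) :
    ((BGraph G).induce S'ᶜ).connectedComponentMk p =
      ((BGraph G).induce S'ᶜ).connectedComponentMk q := by
  by_cases h₂ : p.1.2 = q.1.2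
  · rw [Subtype.ext (Prod.ext h h₂)]
  · exact ConnectedComponent.connectedComponentMk_eq_of_adj (bGraph_adj.2 ⟨h₂, .inl h⟩)

variable (G S') in
def fullComponents : Set ((BGraph G).induce S'ᶜ).ConnectedComponent :=
  (((BGraph G).induce S'ᶜ).connectedComponentMk '' {p | p.1.1 ∈ oneCopy S'})ᶜ

lemma mk_eq_of_mem_fullComponents {C : ((BGraph G).induce S'ᶜ).ConnectedComponent}
    (hC : C ∈ fullComponents G S') {p q : ↥S'ᶜ}
    (hp : ((BGraph G).induce S'ᶜ).connectedComponentMk p = C)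
    (hpq : (G.induce (bothCopies S')ᶜ).Reachable (baseVertex p) (baseVertex q)) :
    ((BGraph G).induce S'ᶜ).connectedComponentMk q = C := by
  suffices ∀ y, (G.induce (bothCopies S')ᶜ).Reachable (baseVertex p) y →
      ∃ r, baseVertex r = y ∧ ((BGraph G).induce S'ᶜ).connectedComponentMk r = C by
    obtain ⟨r, hr, hrC⟩ := this _ hpq
    rw [← hrC]
    exact mk_eq_mk_of_fst_eq (congrArg Subtype.val hr).symm
  intro y hy
  rw [reachable_iff_reflTransGen] at hy
  induction hy with
  | refl => exact ⟨p, rfl, hp⟩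
  | @tail _ z _ hrz ih =>
    obtain ⟨r, rfl, hrC⟩ := ih
    obtain ⟨b, hb⟩ : ∃ b, ((z : V), b) ∉ S' := not_forall.1 z.2
    have hr : (r.1.1, !b) ∉ S' := forall_notMem_of_notMem_oneCopy
      (fst_notMem_bothCopies r) (fun h => hC ⟨r, h, hrC⟩) _
    refine ⟨⟨_, hb⟩, rfl, ?_⟩
    rw [← hrC, mk_eq_mk_of_fst_eq (p := r) (q := ⟨_, hr⟩) rfl]
    exact (ConnectedComponent.connectedComponentMk_eq_of_adj
      (G := (BGraph G).induce S'ᶜ) (v := ⟨_, hr⟩) (w := ⟨_, hb⟩)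
      (bGraph_adj.2 ⟨by simp, .inr hrz⟩)).symm

variable [Finite V]

lemma numComp_le_ncard_oneCopy_add :
    numComp (BGraph G) S' ≤ (oneCopy S').ncard + (fullComponents G S').ncard := by
  rw [numComp, ← Set.ncard_add_ncard_compl
    (((BGraph G).induce S'ᶜ).connectedComponentMk '' {p | p.1.1 ∈ oneCopy S'})]
  refine Nat.add_le_add_right ?_ _
  calc _ ≤ {p : ↥S'ᶜ | p.1.1 ∈ oneCopy S'}.ncard := Set.ncard_image_le
    _ ≤ _ := Set.ncard_le_ncard_of_injOn (fun p => p.1.1) (fun _ hp => hp)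
      (fun _ hp _ _ h => eq_of_fst_eq_of_mem_oneCopy h hp)

lemma ncard_fullComponents_le : (fullComponents G S').ncard ≤ numComp G (bothCopies S') := by
  rw [numComp, ← Set.ncard_univ]
  refine Set.ncard_le_ncard_of_injOn
    (fun C => (G.induce (bothCopies S')ᶜ).connectedComponentMk (baseVertex C.out))
    (fun _ _ => trivial) fun C₁ hC₁ C₂ _ h => ?_
  rw [← C₂.out_eq]
  exact (mk_eq_of_mem_fullComponents hC₁ C₁.out_eq (ConnectedComponent.exact h)).symm

lemma fullComponents_eq_empty (hW : ¬IsCutset G (bothCopies S'))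
    (hS' : IsCutset (BGraph G) S') : fullComponents G S' = ∅ := by
  refine Set.eq_empty_of_forall_notMem fun C hC => hS'.not_ge ?_
  have : Subsingleton (G.induce (bothCopies S')ᶜ).ConnectedComponent :=
    Finite.card_le_one_iff_subsingleton.1 (not_lt.1 hW)
  have hall (q : ↥S'ᶜ) : ((BGraph G).induce S'ᶜ).connectedComponentMk q = C :=
    mk_eq_of_mem_fullComponents hC C.out_eq (ConnectedComponent.exact (Subsingleton.elim _ _))
  rw [numComp, Finite.card_le_one_iff_subsingleton]
  refine ⟨ConnectedComponent.ind₂ fun p q => ?_⟩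
  rw [hall p, hall q]

end Components

theorem stmt_6_general {V : Type*} [Fintype V] (G : SimpleGraph V) (t : ℝ)
    (ht0 : 0 < t) (ht : t ≤ 1 / 2) (htough : IsTough t G) :
    ∀ S' : Set (V × Bool), IsCutset (BGraph G) S' →
      (numComp (BGraph G) S' : ℝ) ≤ (S'.ncard : ℝ) / (2 * t) := by
  intro S' hS'
  rw [le_div_iff₀ (by positivity)]
  have hS'card : (S'.ncard : ℝ) = 2 * (bothCopies S').ncard + (oneCopy S').ncard := by
    exact_mod_cast ncard_eq_two_mul_ncard_bothCopies_add S'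
  have hcomp : (numComp (BGraph G) S' : ℝ) ≤ (oneCopy S').ncard + (fullComponents G S').ncard := by
    exact_mod_cast numComp_le_ncard_oneCopy_add
  have hfull : t * (fullComponents G S').ncard ≤ (bothCopies S').ncard := by
    by_cases hW : IsCutset G (bothCopies S')
    · calc t * (fullComponents G S').ncard ≤ t * numComp G (bothCopies S') := by
            gcongr; exact_mod_cast ncard_fullComponents_le
        _ ≤ (bothCopies S').ncard := htough _ hW
    · simp [fullComponents_eq_empty hW hS']
  have hone : 2 * t * (oneCopy S').ncard ≤ (oneCopy S').ncard :=
    mul_le_of_le_one_left (by positivity) (by linarith)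
  nlinarith

/-- Let `0 < t ≤ 1/2` be a real number and let `G` be a connected `t`-tough
graph. Then `B(G)` is `2t`-tough, i.e. `ω(B(G)−S') ≤ |S'|/(2t)` for every cutset `S'`. -/
theorem stmt_6 {V : Type*} [Fintype V] (G : SimpleGraph V) (t : ℝ)
    (ht0 : 0 < t) (ht : t ≤ 1 / 2) (hconn : G.Connected) (htough : IsTough t G) :
    ∀ S' : Set (V × Bool), IsCutset (BGraph G) S' →
      (numComp (BGraph G) S' : ℝ) ≤ (S'.ncard : ℝ) / (2 * t) :=
  stmt_6_general G t ht0 ht htough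

end Toughness
end

section
/- Let G be a connected noncomplete graph. Then for every vertex set S ⊆ V(B(G)) whose removal disconnects B(G), there exists a vertex set S' ⊆ V(G) with |S'| ≤ |S| whose removal disconnects G. (Equivalently, the vertex connectivity of B(G) is at least the vertex connectivity of G.) -/
open SimpleGraph
open scoped ENNReal

namespace Toughness

variable {V : Type*}

/-- A vertex with no neighbours cannot reach any other vertex. -/
lemma not_reachable_of_isolated {α : Type*} {H : SimpleGraph α} {a b : α}
    (h : ∀ c, ¬ H.Adj a c) (hne : a ≠ b) : ¬ H.Reachable a b := by
  rintro ⟨w⟩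
  cases w with
  | nil => exact hne rfl
  | cons h' _ => exact h _ h'

/-- Two non-reachable vertices outside `S` witness that `S` is a cutset. -/
lemma isCutset_of_not_reachable [Finite V] {G : SimpleGraph V} {S : Set V}
    (a b : ↥(Sᶜ)) (h : ¬ (G.induce Sᶜ).Reachable a b) : IsCutset G S := by
  rw [IsCutset, numComp, Finite.one_lt_card_iff_nontrivial]
  exact ⟨(G.induce Sᶜ).connectedComponentMk a, (G.induce Sᶜ).connectedComponentMk b,
    fun hc => h (SimpleGraph.ConnectedComponent.eq.mp hc)⟩

/-- The complement of a nonadjacent pair is a cutset. -/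
lemma cutset_pair [Finite V] {G : SimpleGraph V} {u w : V} (hne : u ≠ w)
    (hnadj : ¬ G.Adj u w) : IsCutset G (({u, w} : Set V)ᶜ) := by
  have hu : u ∈ (({u, w} : Set V)ᶜ)ᶜ := by simp
  have hw : w ∈ (({u, w} : Set V)ᶜ)ᶜ := by simp
  refine isCutset_of_not_reachable ⟨u, hu⟩ ⟨w, hw⟩ ?_
  apply not_reachable_of_isolated
  · rintro ⟨c, hc⟩ hadj
    rw [compl_compl] at hc
    have hGadj : G.Adj u c := hadj
    rcases hc with rfl | rfl
    · exact hGadj.ne rfl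
    · exact hnadj hGadj
  · intro h
    exact hne (congrArg Subtype.val h)

/-- The open neighbourhood of `v` is a cutset provided some vertex lies outside `N[v]`. -/
lemma cutset_nbhd [Finite V] {G : SimpleGraph V} {v u : V}
    (huv : u ≠ v) (hunadj : ¬ G.Adj v u) : IsCutset G (G.neighborSet v) := by
  have hv : v ∈ (G.neighborSet v)ᶜ := by simp
  have hu : u ∈ (G.neighborSet v)ᶜ := hunadj
  refine isCutset_of_not_reachable ⟨v, hv⟩ ⟨u, hu⟩ ?_
  apply not_reachable_of_isolated
  · rintro ⟨c, hc⟩ hadj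
    exact hc hadj
  · intro h
    exact huv (congrArg Subtype.val h).symm

/-- Adjacency in `BGraph`. -/
lemma bgraph_adj_s7 {G : SimpleGraph V} {a c : V} {b b' : Bool} (hbb : b ≠ b')
    (h : a = c ∨ G.Adj a c) : (BGraph G).Adj (a, b) (c, b') := by
  rw [BGraph, fromRel_adj]
  exact ⟨fun hpq => hbb (congrArg Prod.snd hpq), Or.inl ⟨hbb, h⟩⟩

/-- Lift a reachability in `G` restricted to `W` (a set avoiding both copies in `S`)
to reachability in `B(G) - S`, with arbitrary bits on both ends. -/
lemma lift_reach_s7 {G : SimpleGraph V} {S : Set (V × Bool)} {W : Set V}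
    (hWS : ∀ w ∈ W, ∀ b : Bool, (w, b) ∈ Sᶜ) (x y : ↥W)
    (h : (G.induce W).Reachable x y) (b b' : Bool) :
    ((BGraph G).induce Sᶜ).Reachable ⟨((x : V), b), hWS _ x.2 b⟩
      ⟨((y : V), b'), hWS _ y.2 b'⟩ := by
  obtain ⟨p⟩ := h
  induction p generalizing b b' with
  | nil =>
    by_cases hbb : b = b'
    · subst hbb; exact Reachable.refl _
    · exact (SimpleGraph.Adj.reachable (by
        show ((BGraph G).comap _).Adj _ _
        rw [comap_adj]
        exact bgraph_adj_s7 hbb (Or.inl rfl)))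
  | cons hadj p ih =>
    rename_i zu zv zw
    have hGadj : G.Adj (zu : V) (zv : V) := hadj
    have step1 : ((BGraph G).induce Sᶜ).Adj ⟨((zu : V), b), hWS _ zu.2 b⟩
        ⟨((zv : V), !b), hWS _ zv.2 (!b)⟩ := by
      show ((BGraph G).comap _).Adj _ _
      rw [comap_adj]
      exact bgraph_adj_s7 (by simp) (Or.inr hGadj)
    exact step1.reachable.trans (ih (!b) b')

/-- Let `G` be a connected noncomplete graph. Then for every vertex set
`S ⊆ V(B(G))` whose removal disconnects `B(G)`, there exists a vertex set `S' ⊆ V(G)` with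
`|S'| ≤ |S|` whose removal disconnects `G` (so `κ(B(G)) ≥ κ(G)`). -/
theorem stmt_7 {V : Type*} [Fintype V] (G : SimpleGraph V)
    (hconn : G.Connected) (hnc : G ≠ ⊤) :
    ∀ S : Set (V × Bool), IsCutset (BGraph G) S →
      ∃ S' : Set V, S'.ncard ≤ S.ncard ∧ IsCutset G S' := by
  classical
  intro S hS
  set S₁ : Set V := {v | (v, false) ∈ S} with hS₁def
  set S₂ : Set V := {v | (v, true) ∈ S} with hS₂def
  -- a nonadjacent pair, since G is not complete
  obtain ⟨a₁, a₂, hane, hanadj⟩ : ∃ u w, u ≠ w ∧ ¬ G.Adj u w := by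
    by_contra h
    push_neg at h
    refine hnc ?_
    ext u w
    simp only [top_adj]
    exact ⟨fun h' => h'.ne, fun h' => h u w h'⟩
  -- |S₁ ∪ S₂| ≤ |S|
  have himg : S₁ ∪ S₂ = Prod.fst '' S := by
    ext v
    constructor
    · rintro (h | h)
      · exact ⟨(v, false), h, rfl⟩
      · exact ⟨(v, true), h, rfl⟩
    · rintro ⟨⟨v', b⟩, hb, rfl⟩
      cases b
      · exact Or.inl hb
      · exact Or.inr hb
  have hcard : (S₁ ∪ S₂).ncard ≤ S.ncard := himg ▸ Set.ncard_image_le (Set.toFinite S)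
  by_cases hc1 : IsCutset G (S₁ ∪ S₂)
  · exact ⟨S₁ ∪ S₂, hcard, hc1⟩
  set W := (S₁ ∪ S₂)ᶜ with hWdef
  have hWS : ∀ w ∈ W, ∀ b : Bool, (w, b) ∈ Sᶜ := by
    intro w hw b hwb
    cases b
    · exact hw (Or.inl hwb)
    · exact hw (Or.inr hwb)
  by_cases hWne : W.Nonempty
  · -- main case: W nonempty and G − (S₁ ∪ S₂) connected
    obtain ⟨w₀, hw₀⟩ := hWne
    have hsub : Subsingleton ((G.induce W).ConnectedComponent) := by
      rw [IsCutset, not_lt, numComp, Finite.card_le_one_iff_subsingleton] at hc1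
      exact hc1
    have hreachW : ∀ (x y : ↥W) (b b' : Bool),
        ((BGraph G).induce Sᶜ).Reachable ⟨((x : V), b), hWS _ x.2 b⟩
          ⟨((y : V), b'), hWS _ y.2 b'⟩ := by
      intro x y b b'
      exact lift_reach_s7 hWS x y
        (SimpleGraph.ConnectedComponent.eq.mp (Subsingleton.elim _ _)) b b'
    set a₀ : ↥(Sᶜ) := ⟨(w₀, false), hWS _ hw₀ false⟩ with ha₀def
    have hnontriv : Nontrivial (((BGraph G).induce Sᶜ).ConnectedComponent) := by
      rw [IsCutset, numComp, Finite.one_lt_card_iff_nontrivial] at hS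
      exact hS
    obtain ⟨c, hc⟩ := exists_ne (((BGraph G).induce Sᶜ).connectedComponentMk a₀)
    obtain ⟨x, rfl⟩ := Quot.exists_rep c
    have hxnr : ¬ ((BGraph G).induce Sᶜ).Reachable x a₀ := by
      intro h
      exact hc (SimpleGraph.ConnectedComponent.eq.mpr h)
    obtain ⟨⟨v, b⟩, hxS⟩ := x
    -- N[v] ⊆ S₁ ∪ S₂
    have hN : ∀ u, (v = u ∨ G.Adj v u) → u ∈ S₁ ∪ S₂ := by
      intro u hu
      by_contra huW
      have huS : (u, !b) ∈ Sᶜ := hWS u huW (!b)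
      have hadj : ((BGraph G).induce Sᶜ).Adj ⟨(v, b), hxS⟩ ⟨(u, !b), huS⟩ := by
        show ((BGraph G).comap _).Adj _ _
        rw [comap_adj]
        exact bgraph_adj_s7 (by simp) hu
      exact hxnr (hadj.reachable.trans (hreachW ⟨u, huW⟩ ⟨w₀, hw₀⟩ (!b) false))
    have hNsub : G.neighborSet v ⊆ S₁ ∪ S₂ := fun u hu => hN u (Or.inr hu)
    by_cases hAll : ∀ u, v = u ∨ G.Adj v u
    · -- v dominates everything: |V| ≤ |S|, use the nonadjacent pair
      have huniv : (Set.univ : Set V) ⊆ S₁ ∪ S₂ := fun u _ => hN u (hAll u)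
      refine ⟨({a₁, a₂} : Set V)ᶜ, ?_, cutset_pair hane hanadj⟩
      calc (({a₁, a₂} : Set V)ᶜ).ncard ≤ (Set.univ : Set V).ncard :=
            Set.ncard_le_ncard (Set.subset_univ _) (Set.toFinite _)
        _ ≤ (S₁ ∪ S₂).ncard := Set.ncard_le_ncard huniv (Set.toFinite _)
        _ ≤ S.ncard := hcard
    · push_neg at hAll
      obtain ⟨u, huv, hunadj⟩ := hAll
      refine ⟨G.neighborSet v, ?_, cutset_nbhd (fun h => huv h.symm) hunadj⟩
      exact le_trans (Set.ncard_le_ncard hNsub (Set.toFinite _)) hcard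
  · -- W empty: S₁ ∪ S₂ = univ, so |V| ≤ |S|
    have huniv : S₁ ∪ S₂ = Set.univ := by
      rw [Set.not_nonempty_iff_eq_empty] at hWne
      rw [← compl_compl (S₁ ∪ S₂)]
      rw [show (S₁ ∪ S₂)ᶜ = (∅ : Set V) from hWne]
      simp
    refine ⟨({a₁, a₂} : Set V)ᶜ, ?_, cutset_pair hane hanadj⟩
    calc (({a₁, a₂} : Set V)ᶜ).ncard ≤ (Set.univ : Set V).ncard :=
          Set.ncard_le_ncard (Set.subset_univ _) (Set.toFinite _)
      _ = (S₁ ∪ S₂).ncard := by rw [huniv]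
      _ ≤ S.ncard := hcard

end Toughness
end

section
/- Let G be a connected graph on vertices v_1, …, v_n, let H^1, …, H^n be pairwise disjoint connected 1-tough graphs disjoint from G, and let w^i be a designated vertex of H^i for each i ∈ [n]. Let G' be the graph obtained from the disjoint union of G, H^1, …, H^n by adding the edge v_i w^i for every i ∈ [n]. Then G is 1-tough if and only if G' is 1/2-tough. -/
/-!
Split a vertex set `P` of `G'` into `S ⊆ V(G)` and `Tᵢ ⊆ V(Hⁱ)`. A component of `G' − P` either
meets `G − S`, or lies in some `Hⁱ − Tᵢ` with `Tᵢ ≠ ∅` or `vᵢ ∈ S` (otherwise it joins the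
component of `vᵢ`, as `Hⁱ` is connected). By 1-toughness of `Hⁱ` there are at most
`|Tᵢ| + [vᵢ ∈ S]` of the latter, so `ω(G' − P) ≤ ω(G − S) + |P|`, which is at most `2|P|` when
`G` is 1-tough. Conversely, deleting `S ⊆ V(G)` from `G'` leaves the components of `G − S` and a
separate component `Hⁱ` for each `vᵢ ∈ S`, so `ω(G' − S) ≥ ω(G − S) + |S|`.
-/

open SimpleGraph
open scoped ENNReal

namespace Toughness

variable {V : Type*}

/-- The graph `G'` obtained from the disjoint union of `G` (on vertex type `V`) and the graphs
`H i` (on vertex types `K i`, `i : V`) by adding the edge `v_i w^i` (i.e. `Sum.inl i` —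
`Sum.inr ⟨i, w i⟩`) for every `i`. -/
def glue {V : Type*} {K : V → Type*} (G : SimpleGraph V)
    (H : ∀ i, SimpleGraph (K i)) (w : ∀ i, K i) :
    SimpleGraph (V ⊕ (Σ i, K i)) :=
  SimpleGraph.fromRel (fun x y =>
    match x, y with
    | Sum.inl u, Sum.inl v => G.Adj u v
    | Sum.inl u, Sum.inr p => u = p.1 ∧ p.2 = w p.1
    | Sum.inr p, Sum.inr q => ∃ h : p.1 = q.1, (H q.1).Adj (cast (congrArg K h) p.2) q.2
    | _, _ => False)

theorem _root_.SimpleGraph.Walk.apply_eq_of_forall_adj {W β : Type*} {G : SimpleGraph W}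
    {f : W → β} (hf : ∀ x y, G.Adj x y → f x = f y) {u v : W} (p : G.Walk u v) : f u = f v := by
  induction p with
  | nil => rfl
  | cons h _ ih => exact (hf _ _ h).trans ih

theorem _root_.Nat.card_subtype_sigma {ι : Type*} [Fintype ι] {β : ι → Type*}
    [∀ i, Finite (β i)] (q : (Σ i, β i) → Prop) :
    Nat.card {x // q x} = ∑ i, Nat.card {b : β i // q ⟨i, b⟩} := by
  rw [← Nat.card_sigma]
  exact Nat.card_congr
    { toFun x := ⟨x.1.1, x.1.2, x.2⟩
      invFun x := ⟨⟨x.1, x.2.1⟩, x.2.2⟩ }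

theorem IsTough.numComp_le_max {G : SimpleGraph V} (hG : IsTough 1 G) (S : Set V) :
    numComp G S ≤ max S.ncard 1 := by
  by_cases hS : IsCutset G S
  · have h := hG S hS
    rw [one_mul] at h
    exact le_max_of_le_left (mod_cast h)
  · exact le_max_of_le_right (not_lt.mp hS)

section Glue

variable {K : V → Type*} {G : SimpleGraph V} {H : ∀ i, SimpleGraph (K i)} {w : ∀ i, K i}

def baseSet (P : Set (V ⊕ Σ i, K i)) : Set V := Sum.inl ⁻¹' P

def fiberSet (P : Set (V ⊕ Σ i, K i)) (i : V) : Set (K i) := (fun k ↦ Sum.inr ⟨i, k⟩) ⁻¹' P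

theorem ncard_eq_ncard_baseSet_add_sum_ncard_fiberSet [Fintype V] [∀ i, Finite (K i)]
    (P : Set (V ⊕ Σ i, K i)) :
    P.ncard = (baseSet P).ncard + ∑ i, (fiberSet P i).ncard := by
  rw [← Nat.card_coe_set_eq, Nat.card_congr Equiv.subtypeSum, Nat.card_sum,
    Nat.card_subtype_sigma]
  rfl

theorem glue_adj_inl_inl {u v : V} : (glue G H w).Adj (Sum.inl u) (Sum.inl v) ↔ G.Adj u v := by
  simpa [glue, G.adj_comm] using Adj.ne

theorem glue_adj_inl_inr {u : V} {p : Σ i, K i} :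
    (glue G H w).Adj (Sum.inl u) (Sum.inr p) ↔ u = p.1 ∧ p.2 = w p.1 := by
  simp [glue]

theorem glue_adj_inr_inl {u : V} {p : Σ i, K i} :
    (glue G H w).Adj (Sum.inr p) (Sum.inl u) ↔ u = p.1 ∧ p.2 = w p.1 := by
  rw [adj_comm, glue_adj_inl_inr]

theorem glue_adj_inr_inr_fst {p q : Σ i, K i} (h : (glue G H w).Adj (Sum.inr p) (Sum.inr q)) :
    p.1 = q.1 := by
  simp only [glue, fromRel_adj] at h
  grind

theorem glue_adj_inr_inr_of_adj {i : V} {a b : K i} (h : (H i).Adj a b) :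
    (glue G H w).Adj (Sum.inr ⟨i, a⟩) (Sum.inr ⟨i, b⟩) := by
  simp [glue, h, h.ne]

variable (P : Set (V ⊕ Σ i, K i))

def liftBase : G.induce (baseSet P)ᶜ →g (glue G H w).induce Pᶜ where
  toFun a := ⟨Sum.inl a.1, a.2⟩
  map_rel' h := (glue_adj_inl_inl (H := H) (w := w)).mpr h

def liftFiber (i : V) : (H i).induce (fiberSet P i)ᶜ →g (glue G H w).induce Pᶜ where
  toFun a := ⟨Sum.inr ⟨i, a.1⟩, a.2⟩
  map_rel' h := glue_adj_inr_inr_of_adj (G := G) (w := w) h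

theorem reachable_inr_inl_of_fiberSet_eq_empty {i : V} (hHi : (H i).Connected)
    (hT : fiberSet P i = ∅) (hi : i ∉ baseSet P) (k : K i)
    (hk : (Sum.inr ⟨i, k⟩ : V ⊕ Σ i, K i) ∉ P) :
    ((glue G H w).induce Pᶜ).Reachable ⟨Sum.inr ⟨i, k⟩, hk⟩ ⟨Sum.inl i, hi⟩ := by
  let incl : H i →g (H i).induce (fiberSet P i)ᶜ := ⟨fun a ↦ ⟨a, by simp [hT]⟩, id⟩
  refine (((hHi.preconnected k (w i)).map incl).map (liftFiber P i)).trans (Adj.reachable ?_)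
  exact induce_adj.mpr (glue_adj_inr_inl.mpr ⟨rfl, rfl⟩)

open Classical in
theorem numComp_glue_le [Fintype V] [∀ i, Finite (K i)] (hHconn : ∀ i, (H i).Connected) :
    numComp (glue G H w) P ≤ numComp G (baseSet P) +
      ∑ i : {i // (fiberSet P i).Nonempty ∨ i ∈ baseSet P}, numComp (H i) (fiberSet P i) := by
  let Φ : (G.induce (baseSet P)ᶜ).ConnectedComponent ⊕
      (Σ i : {i // (fiberSet P i).Nonempty ∨ i ∈ baseSet P},
        ((H i).induce (fiberSet P i)ᶜ).ConnectedComponent) →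
      ((glue G H w).induce Pᶜ).ConnectedComponent :=
    Sum.elim (ConnectedComponent.map (liftBase P)) fun c ↦ c.2.map (liftFiber P c.1)
  have hΦ : Function.Surjective Φ := by
    rw [Function.Surjective, ConnectedComponent.forall]
    rintro ⟨u | ⟨i, k⟩, hx⟩
    · exact ⟨Sum.inl (connectedComponentMk _ ⟨u, hx⟩), ConnectedComponent.map_mk _ _⟩
    by_cases hi : (fiberSet P i).Nonempty ∨ i ∈ baseSet P
    · exact ⟨Sum.inr ⟨⟨i, hi⟩, connectedComponentMk _ ⟨k, hx⟩⟩, ConnectedComponent.map_mk _ _⟩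
    rw [not_or, Set.not_nonempty_iff_eq_empty] at hi
    exact ⟨Sum.inl (connectedComponentMk _ ⟨i, hi.2⟩), ConnectedComponent.sound
      (reachable_inr_inl_of_fiberSet_eq_empty P (hHconn i) hi.1 hi.2 k hx).symm⟩
  have h := Nat.card_le_card_of_surjective Φ hΦ
  rwa [Nat.card_sum, Nat.card_sigma] at h

theorem numComp_add_ncard_le_numComp_glue [Finite V] [∀ i, Finite (K i)] (S : Set V) :
    numComp G S + S.ncard ≤ numComp (glue G H w) (Sum.inl '' S) := by
  classical
  -- `Sum.elim id Sigma.fst` collapses each `Hⁱ` onto `vᵢ`; then `F` classifies the `G`-vertex.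
  let F : V → (G.induce Sᶜ).ConnectedComponent ⊕ S := fun u ↦
    if h : u ∈ S then Sum.inr ⟨u, h⟩ else Sum.inl ((G.induce Sᶜ).connectedComponentMk ⟨u, h⟩)
  have hF : ∀ x y : ↥(Sum.inl '' S)ᶜ, ((glue G H w).induce (Sum.inl '' S)ᶜ).Adj x y →
      F (Sum.elim id Sigma.fst x.1) = F (Sum.elim id Sigma.fst y.1) := by
    rintro ⟨u | ⟨i, k⟩, hx⟩ ⟨v | ⟨j, l⟩, hy⟩ hxy <;> rw [induce_adj] at hxy
    · simp only [Set.mem_compl_iff, Set.mem_image, Sum.inl.injEq, exists_eq_right] at hx hy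
      simp only [F, dif_neg hx, dif_neg hy, Sum.elim_inl, id]
      exact congrArg Sum.inl (ConnectedComponent.connectedComponentMk_eq_of_adj
        (induce_adj.mpr (glue_adj_inl_inl.mp hxy)))
    · obtain ⟨rfl, -⟩ := glue_adj_inl_inr.mp hxy
      rfl
    · obtain ⟨rfl, -⟩ := glue_adj_inr_inl.mp hxy
      rfl
    · obtain rfl : i = j := glue_adj_inr_inr_fst hxy
      rfl
  let Ψ := ConnectedComponent.lift (fun x ↦ F (Sum.elim id Sigma.fst x.1))
    fun x y p _ ↦ p.apply_eq_of_forall_adj hF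
  have hΨ : Function.Surjective Ψ := by
    rintro (c | ⟨i, hi⟩)
    · induction c using ConnectedComponent.ind with | h u => ?_
      have hu : u.1 ∉ S := u.2
      exact ⟨connectedComponentMk _ ⟨Sum.inl u, by simpa using hu⟩, by simp [Ψ, F, hu]⟩
    · exact ⟨connectedComponentMk _ ⟨Sum.inr ⟨i, w i⟩, by simp⟩, by simp [Ψ, F, hi]⟩
  have h := Nat.card_le_card_of_surjective Ψ hΨ
  rwa [Nat.card_sum, Nat.card_coe_set_eq, ← numComp] at h

theorem numComp_glue_le_numComp_add_ncard [Fintype V] [∀ i, Finite (K i)]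
    (hHconn : ∀ i, (H i).Connected) (hHtough : ∀ i, IsTough 1 (H i)) :
    numComp (glue G H w) P ≤ numComp G (baseSet P) + P.ncard := by
  classical
  have hfiber (i : {i // (fiberSet P i).Nonempty ∨ i ∈ baseSet P}) :
      numComp (H i) (fiberSet P i) ≤
        (fiberSet P i).ncard + if (i : V) ∈ baseSet P then 1 else 0 := by
    obtain ⟨i, hT | hi⟩ := i <;> have h := (hHtough i).numComp_le_max (fiberSet P i) <;> dsimp only
    · have := (Set.ncard_pos (Set.toFinite _)).mpr hT
      split_ifs <;> omega
    · simp only [hi, if_true]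
      omega
  have hsub (f : V → ℕ) :
      ∑ i : {i // (fiberSet P i).Nonempty ∨ i ∈ baseSet P}, f i ≤ ∑ i, f i := by
    rw [← Finset.sum_subtype _ (fun _ ↦ Finset.mem_filter_univ _)]
    exact Finset.sum_le_univ_sum_of_nonneg fun _ ↦ Nat.zero_le _
  calc numComp (glue G H w) P
      ≤ numComp G (baseSet P) +
          ∑ i : {i // (fiberSet P i).Nonempty ∨ i ∈ baseSet P}, numComp (H i) (fiberSet P i) :=
        numComp_glue_le P hHconn
    _ ≤ numComp G (baseSet P) + ∑ i : {i // (fiberSet P i).Nonempty ∨ i ∈ baseSet P},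
          ((fiberSet P i).ncard + if (i : V) ∈ baseSet P then 1 else 0) := by
        gcongr with i; exact hfiber i
    _ ≤ numComp G (baseSet P) +
          ∑ i, ((fiberSet P i).ncard + if i ∈ baseSet P then 1 else 0) := by
        gcongr
        exact hsub (fun i ↦ (fiberSet P i).ncard + if i ∈ baseSet P then 1 else 0)
    _ = numComp G (baseSet P) + P.ncard := by
        rw [Finset.sum_add_distrib, Finset.sum_boole, ncard_eq_ncard_baseSet_add_sum_ncard_fiberSet,
          Set.ncard_eq_toFinset_card']
        simp [add_comm]

end Glue

theorem stmt_10_general {V : Type*} [Fintype V] {K : V → Type*} [∀ i, Fintype (K i)]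
    (G : SimpleGraph V)
    (H : ∀ i, SimpleGraph (K i)) (hHconn : ∀ i, (H i).Connected)
    (hHtough : ∀ i, IsTough 1 (H i)) (w : ∀ i, K i) :
    IsTough 1 G ↔ IsTough (1 / 2) (glue G H w) := by
  constructor
  · intro hG P hP
    have hupper : numComp (glue G H w) P ≤ numComp G (baseSet P) + P.ncard :=
      numComp_glue_le_numComp_add_ncard P hHconn hHtough
    have hbase := hG.numComp_le_max (baseSet P)
    have hsplit := ncard_eq_ncard_baseSet_add_sum_ncard_fiberSet P
    have hcut : 1 < numComp (glue G H w) P := hP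
    -- `hcut` forces `P ≠ ∅`, hence `max (baseSet P).ncard 1 ≤ P.ncard`.
    have h : numComp (glue G H w) P ≤ 2 * P.ncard := by omega
    have h' : (numComp (glue G H w) P : ℝ) ≤ 2 * P.ncard := mod_cast h
    linarith
  · intro hG' S hS
    have hlower : numComp G S + S.ncard ≤ numComp (glue G H w) (Sum.inl '' S) :=
      numComp_add_ncard_le_numComp_glue S
    have hcut : IsCutset (glue G H w) (Sum.inl '' S) := lt_of_lt_of_le hS (by omega)
    have h := hG' _ hcut
    rw [Set.ncard_image_of_injective S Sum.inl_injective] at h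
    have h' : (numComp G S + S.ncard : ℝ) ≤ numComp (glue G H w) (Sum.inl '' S) := mod_cast hlower
    linarith

/-- Let `G` be a connected graph on vertices `v_1, …, v_n`, let
`H^1, …, H^n` be pairwise disjoint connected `1`-tough graphs disjoint from `G`, and let `w^i`
be a designated vertex of `H^i`. Let `G'` be obtained from the disjoint union of
`G, H^1, …, H^n` by adding the edge `v_i w^i` for every `i`. Then `G` is `1`-tough if and only
if `G'` is `1/2`-tough. -/
theorem stmt_10 {V : Type*} [Fintype V] {K : V → Type*} [∀ i, Fintype (K i)]
    (G : SimpleGraph V) (hGconn : G.Connected)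
    (H : ∀ i, SimpleGraph (K i)) (hHconn : ∀ i, (H i).Connected)
    (hHtough : ∀ i, IsTough 1 (H i)) (w : ∀ i, K i) :
    IsTough 1 G ↔ IsTough (1 / 2) (glue G H w) :=
  stmt_10_general G H hHconn hHtough w

end Toughness
end

section
/- Let G be a connected 3-regular graph. Then the following are equivalent: (1) G has a cut-vertex; (2) τ(G) ≤ 1/2; (3) τ(G) < 2/3. -/
open SimpleGraph
open scoped ENNReal

namespace Toughness

variable {V : Type*}

section Aux

variable {G : SimpleGraph V} {S : Set V}

/-- Walking in `G` from inside a component of `G - S` to a vertex outside that component,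
we must at some point cross into `S`. -/
private lemma escape_aux {v : ↥Sᶜ} :
    ∀ {x w : V} (p : G.Walk x w) (hx : x ∈ Sᶜ),
      (G.induce Sᶜ).Reachable v ⟨x, hx⟩ →
      (∀ hw : w ∈ Sᶜ, ¬ (G.induce Sᶜ).Reachable v ⟨w, hw⟩) →
      ∃ (u : ↥Sᶜ) (s : V), s ∈ S ∧ G.Adj (↑u) s ∧ (G.induce Sᶜ).Reachable v u := by
  intro x w p
  induction p with
  | nil =>
    intro hx hr hw
    exact absurd hr (hw hx)
  | @cons a b c hab p ih =>
    intro hx hr hw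
    by_cases hb : b ∈ S
    · exact ⟨⟨a, hx⟩, b, hb, hab, hr⟩
    · refine ih hb (hr.trans (SimpleGraph.Adj.reachable ?_)) hw
      show (G.induce Sᶜ).Adj ⟨a, hx⟩ ⟨b, hb⟩
      simpa using hab

/-- If the component of `v` in `G - S` sends edges only to the single vertex `s` of `S`, then
any walk in `G - s` starting in that component stays inside the component. -/
private lemma confine_aux {s : V} {v : ↥Sᶜ}
    (hall : ∀ (u : ↥Sᶜ), (G.induce Sᶜ).Reachable v u → ∀ y, y ∈ S → G.Adj (↑u) y → y = s) :
    ∀ {a b : ↥({s}ᶜ : Set V)} (_ : (G.induce ({s}ᶜ : Set V)).Walk a b)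
      (ha : ↑a ∈ Sᶜ), (G.induce Sᶜ).Reachable v ⟨↑a, ha⟩ →
      ∃ hb : ↑b ∈ Sᶜ, (G.induce Sᶜ).Reachable v ⟨↑b, hb⟩ := by
  intro a b p
  induction p with
  | nil =>
    intro ha hr
    exact ⟨ha, hr⟩
  | @cons a b c hab p ih =>
    intro ha hr
    have hadj : G.Adj ↑a ↑b := by simpa using hab
    have hbS : (↑b : V) ∈ Sᶜ := by
      intro hbS
      exact b.2 (hall ⟨↑a, ha⟩ hr ↑b hbS hadj)
    refine ih hbS (hr.trans (SimpleGraph.Adj.reachable ?_))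
    show (G.induce Sᶜ).Adj ⟨↑a, ha⟩ ⟨↑b, hbS⟩
    simpa using hadj

end Aux

/-- Every component of `G - S` is attached to at least two distinct vertices of `S`,
provided `G` is connected with no cut-vertex and `S` is a cutset. -/
private lemma two_neighbors [Fintype V] (G : SimpleGraph V)
    (hconn : G.Connected) (hnocut : ¬ ∃ x : V, IsCutset G {x})
    {S : Set V} (hS : IsCutset G S) (c : (G.induce Sᶜ).ConnectedComponent) :
    ∃ (s₁ s₂ : V) (u₁ u₂ : ↥Sᶜ), s₁ ∈ S ∧ s₂ ∈ S ∧ s₁ ≠ s₂ ∧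
      G.Adj s₁ ↑u₁ ∧ G.Adj s₂ ↑u₂ ∧
      (G.induce Sᶜ).connectedComponentMk u₁ = c ∧
      (G.induce Sᶜ).connectedComponentMk u₂ = c := by
  classical
  obtain ⟨v, hv⟩ := c.exists_rep
  have hnt : Nontrivial ((G.induce Sᶜ).ConnectedComponent) :=
    Finite.one_lt_card_iff_nontrivial.mp hS
  obtain ⟨c', hc'⟩ := exists_ne c
  obtain ⟨w, hw⟩ := c'.exists_rep
  have hnr : ¬ (G.induce Sᶜ).Reachable v w := by
    intro h
    exact hc' (hw ▸ hv ▸ (SimpleGraph.ConnectedComponent.sound h).symm)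
  obtain ⟨p⟩ := hconn ↑v ↑w
  obtain ⟨u₁, s₁, hs₁S, hadj₁, hreach₁⟩ :=
    escape_aux p v.2 (Reachable.refl v) (fun hw' hr => hnr hr)
  by_cases hsec : ∃ (u : ↥Sᶜ) (y : V),
      (G.induce Sᶜ).Reachable v u ∧ y ∈ S ∧ G.Adj (↑u) y ∧ y ≠ s₁
  · obtain ⟨u₂, s₂, hru, hs₂S, hadj₂, hne⟩ := hsec
    exact ⟨s₁, s₂, u₁, u₂, hs₁S, hs₂S, fun h => hne (h.symm), hadj₁.symm, hadj₂.symm,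
      (SimpleGraph.ConnectedComponent.sound hreach₁).symm.trans hv,
      (SimpleGraph.ConnectedComponent.sound hru).symm.trans hv⟩
  · exfalso
    apply hnocut
    refine ⟨s₁, ?_⟩
    push_neg at hsec
    have hall : ∀ (u : ↥Sᶜ), (G.induce Sᶜ).Reachable v u →
        ∀ y, y ∈ S → G.Adj (↑u) y → y = s₁ := fun u hu y => hsec u y hu
    have hvne : (↑v : V) ∈ ({s₁}ᶜ : Set V) := by
      intro h
      exact v.2 (by rw [Set.mem_singleton_iff.mp h]; exact hs₁S)
    have hwne : (↑w : V) ∈ ({s₁}ᶜ : Set V) := by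
      intro h
      exact w.2 (by rw [Set.mem_singleton_iff.mp h]; exact hs₁S)
    have hkey : ¬ (G.induce ({s₁}ᶜ : Set V)).Reachable ⟨↑v, hvne⟩ ⟨↑w, hwne⟩ := by
      intro hr
      obtain ⟨p'⟩ := hr
      obtain ⟨hb, hrb⟩ := confine_aux hall p' v.2 (Reachable.refl v)
      exact hnr hrb
    have hne2 : (G.induce ({s₁}ᶜ : Set V)).connectedComponentMk ⟨↑v, hvne⟩ ≠
        (G.induce ({s₁}ᶜ : Set V)).connectedComponentMk ⟨↑w, hwne⟩ := by
      intro h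
      exact hkey (SimpleGraph.ConnectedComponent.eq.mp h)
    exact Finite.one_lt_card_iff_nontrivial.mpr ⟨_, _, hne2⟩

/-- The key counting bound: if `G` is connected, `3`-regular and has no cut-vertex, then
every cutset `S` satisfies `2 ω(G-S) ≤ 3 |S|`. -/
private lemma count_le [Fintype V] (G : SimpleGraph V) [DecidableRel G.Adj]
    (hconn : G.Connected) (hreg : G.IsRegularOfDegree 3)
    (hnocut : ¬ ∃ x : V, IsCutset G {x}) {S : Set V} (hS : IsCutset G S) :
    2 * numComp G S ≤ 3 * S.ncard := by
  classical
  choose s₁ s₂ u₁ u₂ hs₁ hs₂ hne hadj₁ hadj₂ hc₁ hc₂ using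
    fun c => two_neighbors G hconn hnocut hS c
  set T : Set (V × V) := {p | p.1 ∈ S ∧ G.Adj p.1 p.2 ∧ p.2 ∈ Sᶜ} with hT
  have hmem : ∀ (c : (G.induce Sᶜ).ConnectedComponent) (b : Bool),
      (if b then (s₁ c, (u₁ c : V)) else (s₂ c, (u₂ c : V))) ∈ T := by
    intro c b
    cases b
    · exact ⟨hs₂ c, hadj₂ c, (u₂ c).2⟩
    · exact ⟨hs₁ c, hadj₁ c, (u₁ c).2⟩
  let F : (G.induce Sᶜ).ConnectedComponent × Bool → ↥T :=
    fun cb => ⟨if cb.2 then (s₁ cb.1, ↑(u₁ cb.1)) else (s₂ cb.1, ↑(u₂ cb.1)), hmem cb.1 cb.2⟩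
  have hFinj : Function.Injective F := by
    rintro ⟨c, b⟩ ⟨c', b'⟩ h
    have h' := congrArg Subtype.val h
    cases b <;> cases b' <;> simp only [F, Bool.false_eq_true, if_true, if_false,
      ite_true, ite_false, Prod.mk.injEq] at h'
    · obtain ⟨h1, h2⟩ := h'
      have hu : u₂ c = u₂ c' := Subtype.coe_injective h2
      have hcc : c = c' := (hc₂ c).symm.trans (by rw [hu]; exact hc₂ c')
      rw [hcc]
    · obtain ⟨h1, h2⟩ := h'
      have hu : u₂ c = u₁ c' := Subtype.coe_injective h2
      have hcc : c = c' := (hc₂ c).symm.trans (by rw [hu]; exact hc₁ c')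
      exact absurd (hcc ▸ h1.symm) (hne c)
    · obtain ⟨h1, h2⟩ := h'
      have hu : u₁ c = u₂ c' := Subtype.coe_injective h2
      have hcc : c = c' := (hc₁ c).symm.trans (by rw [hu]; exact hc₂ c')
      exact absurd (hcc ▸ h1) (hne c)
    · obtain ⟨h1, h2⟩ := h'
      have hu : u₁ c = u₁ c' := Subtype.coe_injective h2
      have hcc : c = c' := (hc₁ c).symm.trans (by rw [hu]; exact hc₁ c')
      rw [hcc]
  have h1 : Nat.card ((G.induce Sᶜ).ConnectedComponent × Bool) ≤ Nat.card ↥T :=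
    Nat.card_le_card_of_injective F hFinj
  have h2 : Nat.card ((G.induce Sᶜ).ConnectedComponent × Bool) = numComp G S * 2 := by
    rw [Nat.card_prod]
    simp [numComp]
  let φ : ↥T → ↥S × Fin 3 := fun p =>
    (⟨p.1.1, p.2.1⟩,
      Fin.cast (hreg p.1.1)
        ((G.neighborFinset p.1.1).equivFin ⟨p.1.2, (G.mem_neighborFinset _ _).mpr p.2.2.1⟩))
  have hφinj : Function.Injective φ := by
    rintro ⟨⟨a, x⟩, h⟩ ⟨⟨a', x'⟩, h'⟩ heq
    have ha : a = a' := congrArg (fun q => (q.1 : V)) heq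
    subst ha
    have h2 : (Fin.cast (hreg a)
        ((G.neighborFinset a).equivFin ⟨x, (G.mem_neighborFinset _ _).mpr h.2.1⟩)) =
        (Fin.cast (hreg a)
        ((G.neighborFinset a).equivFin ⟨x', (G.mem_neighborFinset _ _).mpr h'.2.1⟩)) :=
      congrArg Prod.snd heq
    have h3 := (G.neighborFinset a).equivFin.injective (Fin.cast_injective _ h2)
    have hx : x = x' := congrArg Subtype.val h3
    subst hx
    rfl
  have h3 : Nat.card ↥T ≤ Nat.card (↥S × Fin 3) :=
    Nat.card_le_card_of_injective φ hφinj
  have h4 : Nat.card (↥S × Fin 3) = S.ncard * 3 := by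
    rw [Nat.card_prod, Nat.card_coe_set_eq]
    simp
  omega

/-- Let `G` be a connected `3`-regular graph. Then the following are
equivalent: (1) `G` has a cut-vertex; (2) `τ(G) ≤ 1/2`; (3) `τ(G) < 2/3`.
(Complete graphs have toughness `∞` here.) -/
theorem stmt_11 {V : Type*} [Fintype V] (G : SimpleGraph V) [DecidableRel G.Adj]
    (hconn : G.Connected) (hreg : G.IsRegularOfDegree 3) :
    ((∃ v : V, IsCutset G {v}) ↔ toughness G ≤ 1 / 2) ∧
    (toughness G ≤ 1 / 2 ↔ toughness G < 2 / 3) := by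
  classical
  have half_lt : (1/2 : ℝ≥0∞) < 2/3 := by
    rw [ENNReal.lt_div_iff_mul_lt (by norm_num) (by norm_num), mul_comm, ← mul_div_assoc,
      ENNReal.div_lt_iff (by norm_num) (by norm_num)]
    norm_num
  have hA2 : (∃ v : V, IsCutset G {v}) → toughness G ≤ 1 / 2 := by
    rintro ⟨v, hv⟩
    have h2 : 2 ≤ numComp G {v} := hv
    calc toughness G ≤ ((({v} : Set V).ncard : ℝ≥0∞)) / (numComp G {v} : ℝ≥0∞) :=
          iInf₂_le _ hv
      _ = 1 / (numComp G {v} : ℝ≥0∞) := by rw [Set.ncard_singleton]; norm_num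
      _ ≤ 1 / 2 := by
          gcongr
          exact_mod_cast h2
  have hC1 : toughness G < 2 / 3 → ∃ v : V, IsCutset G {v} := by
    contrapose!
    intro hnocut
    refine le_iInf fun S => le_iInf fun hS => ?_
    have hcount : 2 * numComp G S ≤ 3 * S.ncard :=
      count_le G hconn hreg (not_exists.mpr hnocut) hS
    have hm : 0 < numComp G S := lt_trans one_pos hS
    rw [ENNReal.le_div_iff_mul_le (Or.inl (by exact_mod_cast hm.ne')) (Or.inl (by simp)),
      mul_comm, ← mul_div_assoc, ENNReal.div_le_iff_le_mul (by norm_num) (by norm_num)]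
    calc ((numComp G S : ℝ≥0∞) * 2) = ((2 * numComp G S : ℕ) : ℝ≥0∞) := by push_cast; ring
      _ ≤ ((3 * S.ncard : ℕ) : ℝ≥0∞) := by exact_mod_cast hcount
      _ = (S.ncard : ℝ≥0∞) * 3 := by push_cast; ring
  exact ⟨⟨hA2, fun h => hC1 (lt_of_le_of_lt h half_lt)⟩,
    ⟨fun h => lt_of_le_of_lt h half_lt, fun h => hA2 (hC1 h)⟩⟩

end Toughness
end

section
/- Let G be a connected 3-regular graph that admits a cutset S with ω(G−S) > 2|S| (i.e., τ(G) < 1/2). Then there exists a vertex v of G whose removal leaves at least three connected components, i.e., ω(G−{v}) ≥ 3. -/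
/-!
Putting a vertex `s` back into `G - S` can only merge the components that contain neighbours
of `s` into the component of `s`, so `ω(G - S) + 1 ≤ ω(G - (S \ {s})) + deg s`. In a cubic
graph, putting back every vertex of `S` except one, `s`, gives
`ω(G - S) ≤ ω(G - {s}) + 2 (|S| - 1)`, and then `ω(G - S) > 2 |S|` forces `ω(G - {s}) ≥ 3`.
The set `S` is nonempty because `G` is connected while `G - S` is not.
-/

open SimpleGraph
open scoped ENNReal

variable {V : Type*}

namespace SimpleGraph

variable {G : SimpleGraph V} {W : Set V} {s : V}

theorem Walk.reachable_induce_sdiff_singleton_or_exists_adj :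
    ∀ {x y : W}, (G.induce W).Walk x y → ∀ hx : x.1 ≠ s,
      (∃ hy : y.1 ≠ s, (G.induce (W \ {s})).Reachable ⟨x, x.2, hx⟩ ⟨y, y.2, hy⟩) ∨
        ∃ u, ∃ hu : u ∈ W \ {s}, G.Adj s u ∧
          (G.induce (W \ {s})).Reachable ⟨x, x.2, hx⟩ ⟨u, hu⟩
  | _, _, .nil, hx => .inl ⟨hx, .rfl⟩
  | x, _, .cons (v := z) hxz p, hx => by
    have hxz' : G.Adj x z := hxz
    by_cases hz : z.1 = s
    · exact .inr ⟨x, ⟨x.2, hx⟩, hz ▸ hxz'.symm, .rfl⟩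
    · have hstep : (G.induce (W \ {s})).Reachable ⟨x, x.2, hx⟩ ⟨z, z.2, hz⟩ :=
        (show (G.induce (W \ {s})).Adj ⟨x, x.2, hx⟩ ⟨z, z.2, hz⟩ from hxz').reachable
      rcases p.reachable_induce_sdiff_singleton_or_exists_adj hz with
        ⟨hy, h⟩ | ⟨u, hu, hsu, h⟩
      · exact .inl ⟨hy, hstep.trans h⟩
      · exact .inr ⟨u, hu, hsu, hstep.trans h⟩

theorem card_connectedComponent_induce_sdiff_singleton_add_one_le [Fintype V]
    [DecidableRel G.Adj] (hs : s ∈ W) :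
    Nat.card (G.induce (W \ {s})).ConnectedComponent + 1 ≤
      Nat.card (G.induce W).ConnectedComponent + G.degree s := by
  let f := ConnectedComponent.map (G.induceHomOfLE (Set.sdiff_subset : W \ {s} ⊆ W)).toHom
  let K := (G.induce W).connectedComponentMk ⟨s, hs⟩
  let F := f ⁻¹' {K}
  -- quantified over all `c`, so that `choose` yields a total function
  have hfib : ∀ c, ∃ u : V, c ∈ F →
      G.Adj s u ∧ ∃ hu : u ∈ W \ {s},
        c = (G.induce (W \ {s})).connectedComponentMk ⟨u, hu⟩ := by
    intro c
    induction c using ConnectedComponent.ind with | h x => ?_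
    by_cases hc : (G.induce W).connectedComponentMk ⟨x, x.2.1⟩ = K
    · obtain ⟨p⟩ := ConnectedComponent.exact hc
      rcases p.reachable_induce_sdiff_singleton_or_exists_adj x.2.2 with
        ⟨hy, -⟩ | ⟨u, hu, hsu, h⟩
      · exact absurd rfl hy
      · exact ⟨u, fun _ ↦ ⟨hsu, hu, ConnectedComponent.sound h⟩⟩
    · exact ⟨s, fun h ↦ absurd h hc⟩
  choose g hg using hfib
  have hF : F.ncard ≤ G.degree s := by
    have hinj : Set.InjOn g F := by
      intro c hc c' hc' h
      obtain ⟨-, hu, hc⟩ := hg c hc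
      obtain ⟨-, hu', hc'⟩ := hg c' hc'
      rw [hc, hc']
      congr 1
      exact Subtype.ext h
    calc F.ncard ≤ (G.neighborSet s).ncard :=
          Set.ncard_le_ncard_of_injOn g (fun c hc ↦ (hg c hc).1) hinj
      _ = G.degree s := by
          rw [Set.ncard_eq_toFinset_card', Set.toFinset_card, card_neighborSet_eq_degree]
  have hK : ∀ u (hu : u ∈ W \ {s}), G.Adj s u →
      ∀ x, (G.induce (W \ {s})).Reachable x ⟨u, hu⟩ →
        f ((G.induce (W \ {s})).connectedComponentMk x) = K := fun u hu hsu x hr ↦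
    ConnectedComponent.sound ((hr.map (G.induceHomOfLE Set.sdiff_subset).toHom).trans
      (show (G.induce W).Adj ⟨u, hu.1⟩ ⟨s, hs⟩ from hsu.symm).reachable)
  have hFc : Fᶜ.ncard + 1 ≤ Nat.card (G.induce W).ConnectedComponent := by
    have hinj : Set.InjOn f Fᶜ := by
      intro c hc c' _ h
      induction c using ConnectedComponent.ind with | h x => ?_
      induction c' using ConnectedComponent.ind with | h x' => ?_
      have h : (G.induce W).connectedComponentMk ⟨x, x.2.1⟩ =
          (G.induce W).connectedComponentMk ⟨x', x'.2.1⟩ := h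
      obtain ⟨p⟩ := ConnectedComponent.exact h
      rcases p.reachable_induce_sdiff_singleton_or_exists_adj x.2.2 with
        ⟨_, hr⟩ | ⟨u, hu, hsu, hr⟩
      · exact ConnectedComponent.sound hr
      · exact absurd (hK u hu hsu x hr) hc
    have hmaps : ∀ c ∈ Fᶜ, f c ∈ ({K}ᶜ : Set _) := fun _ hc ↦ hc
    calc Fᶜ.ncard + 1 ≤ ({K}ᶜ : Set _).ncard + ({K} : Set _).ncard := by
          rw [Set.ncard_singleton]
          exact Nat.add_le_add_right (Set.ncard_le_ncard_of_injOn f hmaps hinj) 1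
      _ = Nat.card (G.induce W).ConnectedComponent := by rw [add_comm, Set.ncard_add_ncard_compl]
  have := Set.ncard_add_ncard_compl F
  omega

end SimpleGraph

namespace Toughness

section

variable {G : SimpleGraph V}

theorem numComp_empty_of_connected (hconn : G.Connected) : numComp G ∅ = 1 := by
  rw [numComp, Set.compl_empty, Nat.card_congr (induceUnivIso G).connectedComponentEquiv,
    Nat.card_eq_one_iff_unique]
  exact ⟨hconn.preconnected.subsingleton_connectedComponent,
    ⟨G.connectedComponentMk hconn.nonempty.some⟩⟩

variable [Fintype V] [DecidableRel G.Adj]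

theorem numComp_add_one_le_numComp_sdiff_singleton_add_degree {S : Set V} {s : V} (hs : s ∈ S) :
    numComp G S + 1 ≤ numComp G (S \ {s}) + G.degree s := by
  have hcompl : Sᶜ = (S \ {s})ᶜ \ {s} := by
    ext x
    by_cases hx : x = s <;> simp [hx, hs]
  rw [numComp, hcompl]
  exact card_connectedComponent_induce_sdiff_singleton_add_one_le (by simp)

theorem numComp_add_card_le_numComp_sdiff_add_sum_degree {S : Set V} (A : Finset V)
    (hA : ↑A ⊆ S) :
    numComp G S + A.card ≤ numComp G (S \ ↑A) + ∑ v ∈ A, G.degree v := by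
  classical
  induction A using Finset.induction_on with
  | empty => simp
  | insert a A ha ih =>
    have hAS : ↑A ⊆ S := fun x hx ↦ hA (Finset.mem_insert_of_mem hx)
    have hstep := numComp_add_one_le_numComp_sdiff_singleton_add_degree (G := G) (S := S \ ↑A)
      ⟨hA (Finset.mem_insert_self a A), ha⟩
    rw [Set.sdiff_sdiff, Set.union_comm, ← Finset.coe_singleton, ← Finset.coe_union,
      ← Finset.insert_eq] at hstep
    rw [Finset.card_insert_of_notMem ha, Finset.sum_insert ha]
    have := ih hAS
    omega

end

/-- Let `G` be a connected `3`-regular graph that admits a cutset `S` with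
`ω(G−S) > 2|S|` (i.e. `τ(G) < 1/2`). Then there exists a vertex `v` of `G` whose removal
leaves at least three connected components. -/
theorem stmt_13 {V : Type*} [Fintype V] (G : SimpleGraph V) [DecidableRel G.Adj]
    (hconn : G.Connected) (hreg : G.IsRegularOfDegree 3)
    (S : Set V) (hcut : IsCutset G S) (h : 2 * S.ncard < numComp G S) :
    ∃ v : V, 3 ≤ numComp G {v} := by
  classical
  obtain ⟨s, hs⟩ : S.Nonempty := by
    rw [Set.nonempty_iff_ne_empty]
    rintro rfl
    exact absurd hcut (by simp [IsCutset, numComp_empty_of_connected hconn])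
  refine ⟨s, ?_⟩
  have hrest : ↑(S \ {s}).toFinset ⊆ S := by simp
  have hbound := numComp_add_card_le_numComp_sdiff_add_sum_degree (G := G) (S \ {s}).toFinset hrest
  rw [Set.coe_toFinset, Set.sdiff_sdiff_cancel_left (Set.singleton_subset_iff.2 hs),
    Finset.sum_congr rfl fun v _ ↦ hreg v, Finset.sum_const, smul_eq_mul,
    ← Set.ncard_eq_toFinset_card', Set.ncard_sdiff_singleton_of_mem hs] at hbound
  have := (Set.ncard_pos).2 ⟨s, hs⟩
  omega

end Toughness
end

section
/- Let G be a connected 3-regular graph containing a cut-vertex. Then τ(G) = 1/3 or τ(G) = 1/2. -/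
open SimpleGraph
open scoped ENNReal

namespace Toughness
variable {V : Type*}


lemma walk_prop {α : Type*} {H : SimpleGraph α} {Q : α → Prop}
    (h : ∀ a b, H.Adj a b → Q a → Q b) {x y : α} (p : H.Walk x y) (hx : Q x) : Q y := by
  induction p with
  | nil => exact hx
  | cons a _ ih => exact ih (h _ _ a hx)

/-- If all boundary edges of component `C` of `G − S` go to `u ∈ S`, and `w ∈ C` also lies in
the component `D` of `G − u`, then `D ⊆ C`. -/
lemma comp_subset {G : SimpleGraph V} {S : Set V} {u : V} (hu : u ∈ S)
    {C : G.ComponentCompl S}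
    (huniq : ∀ a b : V, a ∈ C → b ∈ S → G.Adj a b → b = u)
    {D : G.ComponentCompl ({u} : Set V)} {w : V} (hwC : w ∈ C) (hwD : w ∈ D) :
    ∀ v ∈ D, v ∈ C := by
  intro v hv
  obtain ⟨hv1, hv2⟩ := hv
  obtain ⟨hw1, hw2⟩ := hwD
  rw [← hw2] at hv2
  have hreach : (G.induce ({u} : Set V)ᶜ).Reachable ⟨w, hw1⟩ ⟨v, hv1⟩ :=
    (ConnectedComponent.eq.mp hv2).symm
  obtain ⟨p⟩ := hreach
  refine walk_prop (Q := fun x : ↥(({u} : Set V)ᶜ) => (x : V) ∈ C) (fun a b hab ha => ?_) p hwC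
  have hadj : G.Adj (a : V) (b : V) := hab
  by_cases hbS : (b : V) ∈ S
  · exact absurd (huniq a b ha hbS hadj) b.2
  · exact ComponentCompl.mem_of_adj (a : V) (b : V) ha hbS hadj

end Toughness

namespace Toughness
variable {V : Type*}

lemma numComp_empty (G : SimpleGraph V) (hconn : G.Connected) : numComp G ∅ = 1 := by
  have h1 : (G.induce (∅ : Set V)ᶜ).Connected := by
    rw [Set.compl_empty]
    exact (G.induceUnivIso).connected_iff.mpr hconn
  rw [numComp, Nat.card_eq_one_iff_unique]
  refine ⟨⟨fun a b => ?_⟩, ⟨(G.induce (∅ : Set V)ᶜ).connectedComponentMk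
    ⟨hconn.nonempty.some, by simp⟩⟩⟩
  refine ConnectedComponent.ind₂ (fun u v => ?_) a b
  exact ConnectedComponent.eq.mpr (h1.preconnected u v)

lemma IsCutset.nonempty' {G : SimpleGraph V} {S : Set V} (hconn : G.Connected)
    (hS : IsCutset G S) : S.Nonempty := by
  rcases S.eq_empty_or_nonempty with rfl | h
  · exact absurd hS (by simp [IsCutset, numComp_empty G hconn])
  · exact h

section Counting
variable [Fintype V] {G : SimpleGraph V} [DecidableRel G.Adj] {S : Set V}

lemma counting (hconn : G.Connected) (hreg : G.IsRegularOfDegree 3) (hS : IsCutset G S) :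
    numComp G S ≤ 3 * S.ncard ∧
      (2 * S.ncard + 1 ≤ numComp G S → 2 ≤ S.ncard → ∃ u : V, 3 ≤ numComp G {u}) := by
  classical
  have hSne : S.Nonempty := hS.nonempty' hconn
  letI : Fintype (G.ComponentCompl S) := Fintype.ofFinite _
  set B : G.ComponentCompl S → Finset (V × V) :=
    fun C => Finset.univ.filter (fun p => p.1 ∈ C ∧ p.2 ∈ S ∧ G.Adj p.1 p.2) with hB
  set T : Finset (V × V) :=
    Finset.univ.filter (fun p => p.1 ∉ S ∧ p.2 ∈ S ∧ G.Adj p.1 p.2) with hT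
  have hmemB : ∀ C p, p ∈ B C ↔ p.1 ∈ C ∧ p.2 ∈ S ∧ G.Adj p.1 p.2 := by
    intro C p; simp [hB]
  have hmemT : ∀ p, p ∈ T ↔ p.1 ∉ S ∧ p.2 ∈ S ∧ G.Adj p.1 p.2 := by
    intro p; simp [hT]
  -- T is the disjoint union of the B C
  have hTeq : T = Finset.univ.biUnion B := by
    ext p
    simp only [Finset.mem_biUnion, Finset.mem_univ, true_and, hmemB, hmemT]
    constructor
    · rintro ⟨h1, h2, h3⟩
      exact ⟨G.componentComplMk h1, G.componentComplMk_mem h1, h2, h3⟩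
    · rintro ⟨C, hC, h2, h3⟩
      exact ⟨ComponentCompl.notMem_of_mem hC, h2, h3⟩
  have hdisj : ∀ C ∈ Finset.univ, ∀ D ∈ Finset.univ, C ≠ D → Disjoint (B C) (B D) := by
    intro C _ D _ hCD
    rw [Finset.disjoint_left]
    intro p hpC hpD
    obtain ⟨⟨h1, e1⟩, -, -⟩ := (hmemB C p).mp hpC
    obtain ⟨⟨h2, e2⟩, -, -⟩ := (hmemB D p).mp hpD
    exact hCD (e1 ▸ e2 ▸ rfl)
  have hsum : ∑ C : G.ComponentCompl S, (B C).card = T.card := by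
    rw [hTeq, Finset.card_biUnion hdisj]
  -- T.card ≤ 3 |S|
  have hTle : T.card ≤ 3 * S.ncard := by
    have hinj : ∀ p ∈ T, ∀ q ∈ T, (⟨p.2, p.1⟩ : Σ _ : V, V) = ⟨q.2, q.1⟩ → p = q := by
      rintro ⟨a, b⟩ _ ⟨c, d⟩ _ h
      simp only [Sigma.mk.inj_iff, heq_eq_eq] at h
      simp [h.1, h.2]
    have hmaps : ∀ p ∈ T, (⟨p.2, p.1⟩ : Σ _ : V, V) ∈
        S.toFinset.sigma (fun s => G.neighborFinset s) := by
      intro p hp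
      obtain ⟨h1, h2, h3⟩ := (hmemT p).mp hp
      simp only [Finset.mem_sigma, Set.mem_toFinset, mem_neighborFinset]
      exact ⟨h2, h3.symm⟩
    calc T.card ≤ (S.toFinset.sigma (fun s => G.neighborFinset s)).card :=
          Finset.card_le_card_of_injOn _ hmaps (fun p hp q hq => hinj p hp q hq)
      _ = ∑ s ∈ S.toFinset, (G.neighborFinset s).card := Finset.card_sigma _ _
      _ = ∑ s ∈ S.toFinset, 3 := by
          refine Finset.sum_congr rfl fun s _ => ?_
          rw [G.card_neighborFinset_eq_degree]; exact hreg s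
      _ = 3 * S.ncard := by
          rw [Finset.sum_const, smul_eq_mul, Set.ncard_eq_toFinset_card', mul_comm]
  -- every component has at least one boundary edge
  have hBne : ∀ C : G.ComponentCompl S, (B C).Nonempty := by
    intro C
    obtain ⟨ck, h1, h2, h3⟩ := C.exists_adj_boundary_pair hconn.preconnected hSne
    exact ⟨ck, (hmemB C ck).mpr ⟨h1, h2, h3⟩⟩
  have hcardK : numComp G S = Fintype.card (G.ComponentCompl S) := Nat.card_eq_fintype_card
  have hle3 : numComp G S ≤ 3 * S.ncard := by
    calc numComp G S = ∑ _C : G.ComponentCompl S, 1 := by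
          rw [hcardK, Finset.card_univ.symm, Finset.card_eq_sum_ones]
      _ ≤ ∑ C : G.ComponentCompl S, (B C).card :=
          Finset.sum_le_sum fun C _ => Finset.card_pos.mpr (hBne C)
      _ = T.card := hsum
      _ ≤ 3 * S.ncard := hTle
  refine ⟨hle3, fun hbig h2S => ?_⟩
  -- count components with exactly one boundary edge
  set F : Finset (G.ComponentCompl S) := Finset.univ.filter (fun C => (B C).card = 1) with hF
  have hsplit : F.card + (Finset.univ.filter (fun C => ¬(B C).card = 1)).card =
      Fintype.card (G.ComponentCompl S) := by
    rw [← Finset.card_univ]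
    exact Finset.card_filter_add_card_filter_not _
  have hsum2 : ∑ C ∈ F, (B C).card +
      ∑ C ∈ Finset.univ.filter (fun C => ¬(B C).card = 1), (B C).card =
      ∑ C : G.ComponentCompl S, (B C).card :=
    Finset.sum_filter_add_sum_filter_not _ _ _
  have hFsum : ∑ C ∈ F, (B C).card = F.card := by
    rw [Finset.card_eq_sum_ones]
    exact Finset.sum_congr rfl fun C hC => (Finset.mem_filter.mp hC).2
  have hNsum : 2 * (Finset.univ.filter (fun C => ¬(B C).card = 1)).card ≤
      ∑ C ∈ Finset.univ.filter (fun C => ¬(B C).card = 1), (B C).card := by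
    calc 2 * (Finset.univ.filter (fun C => ¬(B C).card = 1)).card
        = ∑ _C ∈ Finset.univ.filter (fun C => ¬(B C).card = 1), 2 := by
          rw [Finset.sum_const, smul_eq_mul, mul_comm]
      _ ≤ ∑ C ∈ Finset.univ.filter (fun C => ¬(B C).card = 1), (B C).card := by
          refine Finset.sum_le_sum fun C hC => ?_
          have h1 := (Finset.mem_filter.mp hC).2
          have h2 : 1 ≤ (B C).card := Finset.card_pos.mpr (hBne C)
          omega
  have hkey : S.ncard + 1 ≤ F.card := by omega
  have hcardlt : S.toFinset.card < F.card := by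
    rw [← Set.ncard_eq_toFinset_card']; omega
  set f : G.ComponentCompl S → V := fun C => (hBne C).choose.2 with hf
  have hmapsF : ∀ C ∈ F, f C ∈ S.toFinset := fun C _ =>
    Set.mem_toFinset.mpr ((hmemB C _).mp (hBne C).choose_spec).2.1
  obtain ⟨C₁, hC₁, C₂, hC₂, hne, hfeq⟩ :=
    Finset.exists_ne_map_eq_of_card_lt_of_maps_to hcardlt hmapsF
  set u := f C₁ with hu
  have huS : u ∈ S := Set.mem_toFinset.mp (hmapsF C₁ hC₁)
  have huniqgen : ∀ C ∈ F, ∀ a b : V, a ∈ C → b ∈ S → G.Adj a b → b = f C := by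
    intro C hC a b ha hb hadj
    have h1 : (B C).card ≤ 1 := le_of_eq (Finset.mem_filter.mp hC).2
    have heq : (a, b) = (hBne C).choose :=
      Finset.card_le_one.mp h1 _ ((hmemB C _).mpr ⟨ha, hb, hadj⟩) _ (hBne C).choose_spec
    show b = (hBne C).choose.2
    rw [← heq]
  -- the two special components and their attachment vertices
  have hw₁C : (hBne C₁).choose.1 ∈ C₁ := ((hmemB _ _).mp (hBne C₁).choose_spec).1
  have hw₂C : (hBne C₂).choose.1 ∈ C₂ := ((hmemB _ _).mp (hBne C₂).choose_spec).1
  set w₁ := (hBne C₁).choose.1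
  set w₂ := (hBne C₂).choose.1
  have hw₁S : w₁ ∉ S := ComponentCompl.notMem_of_mem hw₁C
  have hw₂S : w₂ ∉ S := ComponentCompl.notMem_of_mem hw₂C
  have hw₁u : w₁ ∉ ({u} : Set V) := by
    simp only [Set.mem_singleton_iff]; intro h; rw [h] at hw₁S; exact hw₁S huS
  have hw₂u : w₂ ∉ ({u} : Set V) := by
    simp only [Set.mem_singleton_iff]; intro h; rw [h] at hw₂S; exact hw₂S huS
  obtain ⟨s', hs'S, hs'u⟩ := Set.exists_ne_of_one_lt_ncard (by omega : 1 < S.ncard) u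
  have hs'mem : s' ∉ ({u} : Set V) := by simpa using hs'u
  set D₁ := G.componentComplMk hw₁u with hD₁
  set D₂ := G.componentComplMk hw₂u with hD₂
  set D₃ := G.componentComplMk hs'mem with hD₃
  have huniq₁ : ∀ a b : V, a ∈ C₁ → b ∈ S → G.Adj a b → b = u := huniqgen C₁ hC₁
  have huniq₂ : ∀ a b : V, a ∈ C₂ → b ∈ S → G.Adj a b → b = u := by
    intro a b ha hb hadj
    exact (huniqgen C₂ hC₂ a b ha hb hadj).trans hfeq.symm
  have hsub₁ : ∀ v ∈ D₁, v ∈ C₁ :=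
    comp_subset huS huniq₁ hw₁C (G.componentComplMk_mem hw₁u)
  have hsub₂ : ∀ v ∈ D₂, v ∈ C₂ :=
    comp_subset huS huniq₂ hw₂C (G.componentComplMk_mem hw₂u)
  have h13 : D₁ ≠ D₃ := by
    intro h
    have : s' ∈ D₁ := h ▸ G.componentComplMk_mem hs'mem
    exact ComponentCompl.notMem_of_mem (hsub₁ s' this) hs'S
  have h23 : D₂ ≠ D₃ := by
    intro h
    have : s' ∈ D₂ := h ▸ G.componentComplMk_mem hs'mem
    exact ComponentCompl.notMem_of_mem (hsub₂ s' this) hs'S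
  have h12 : D₁ ≠ D₂ := by
    intro h
    have hmem : w₂ ∈ D₁ := h ▸ G.componentComplMk_mem hw₂u
    have hw₂C₁ : w₂ ∈ C₁ := hsub₁ w₂ hmem
    obtain ⟨hx, ex⟩ := hw₂C₁
    obtain ⟨hy, ey⟩ := hw₂C
    exact hne (ex ▸ ey ▸ rfl)
  refine ⟨u, ?_⟩
  letI : Fintype (G.ComponentCompl ({u} : Set V)) := Fintype.ofFinite _
  have hcard3 : ({D₁, D₂, D₃} : Finset (G.ComponentCompl ({u} : Set V))).card = 3 := by
    rw [Finset.card_insert_of_notMem (by simp [h12, h13]),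
      Finset.card_insert_of_notMem (by simp [h23]), Finset.card_singleton]
  calc 3 = ({D₁, D₂, D₃} : Finset (G.ComponentCompl ({u} : Set V))).card := hcard3.symm
    _ ≤ Fintype.card (G.ComponentCompl ({u} : Set V)) := Finset.card_le_univ _
    _ = numComp G {u} := Nat.card_eq_fintype_card.symm

end Counting
end Toughness

namespace Toughness
variable {V : Type*}

lemma ratio_lower {a b : ℕ} (k : ℝ≥0∞) (hk0 : k ≠ 0) (hktop : k ≠ ⊤) (hb : b ≠ 0)
    (h : (b : ℝ≥0∞) ≤ k * a) : 1 / k ≤ (a : ℝ≥0∞) / b := by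
  rw [ENNReal.le_div_iff_mul_le (Or.inl (by exact_mod_cast hb))
    (Or.inl (ENNReal.natCast_ne_top b))]
  calc 1 / k * b ≤ 1 / k * (k * a) := by gcongr
    _ = a := by
        rw [← mul_assoc, one_div, ENNReal.inv_mul_cancel hk0 hktop, one_mul]

lemma toughness_le {G : SimpleGraph V} {S : Set V} (hS : IsCutset G S) :
    toughness G ≤ (S.ncard : ℝ≥0∞) / (numComp G S : ℝ≥0∞) :=
  iInf₂_le S hS

/-- Let `G` be a connected `3`-regular graph containing a cut-vertex.
Then `τ(G) = 1/3` or `τ(G) = 1/2`. -/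
theorem stmt_15 {V : Type*} [Fintype V] (G : SimpleGraph V) [DecidableRel G.Adj]
    (hconn : G.Connected) (hreg : G.IsRegularOfDegree 3)
    (hcv : ∃ v : V, IsCutset G {v}) :
    toughness G = 1 / 3 ∨ toughness G = 1 / 2 := by
  by_cases hbig : ∃ S : Set V, IsCutset G S ∧ 2 * S.ncard + 1 ≤ numComp G S
  · left
    obtain ⟨S, hS, hb⟩ := hbig
    obtain ⟨u, hu3⟩ : ∃ u : V, 3 ≤ numComp G {u} := by
      rcases le_or_gt 2 S.ncard with h | h
      · exact (counting hconn hreg hS).2 hb h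
      · have hne : S.Nonempty := hS.nonempty' hconn
        have h0 : 0 < S.ncard := (Set.ncard_pos S.toFinite).mpr hne
        have h1 : S.ncard = 1 := by omega
        obtain ⟨v, rfl⟩ := Set.ncard_eq_one.mp h1
        exact ⟨v, by rw [h1] at hb; omega⟩
    have hcut : IsCutset G {u} := by unfold IsCutset; omega
    apply le_antisymm
    · refine le_trans (toughness_le hcut) ?_
      rw [Set.ncard_singleton, Nat.cast_one]
      calc (1 : ℝ≥0∞) / (numComp G {u} : ℝ≥0∞) ≤ 1 / 3 := by
            refine ENNReal.div_le_div_left ?_ 1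
            exact_mod_cast hu3
        _ = 1 / 3 := rfl
    · refine le_iInf₂ fun T hT => ?_
      have hle := (counting hconn hreg hT).1
      refine ratio_lower 3 (by norm_num) (by norm_num) (by unfold IsCutset at hT; omega) ?_
      calc ((numComp G T : ℝ≥0∞)) ≤ ((3 * T.ncard : ℕ) : ℝ≥0∞) := by exact_mod_cast hle
        _ = 3 * T.ncard := by push_cast; ring
  · right
    push_neg at hbig
    obtain ⟨v, hv⟩ := hcv
    apply le_antisymm
    · refine le_trans (toughness_le hv) ?_
      rw [Set.ncard_singleton, Nat.cast_one]
      refine ENNReal.div_le_div_left ?_ 1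
      exact_mod_cast (hv : 1 < numComp G {v})
    · refine le_iInf₂ fun T hT => ?_
      have hle : numComp G T ≤ 2 * T.ncard := by
        have := hbig T hT; omega
      refine ratio_lower 2 (by norm_num) (by norm_num) (by unfold IsCutset at hT; omega) ?_
      calc ((numComp G T : ℝ≥0∞)) ≤ ((2 * T.ncard : ℕ) : ℝ≥0∞) := by exact_mod_cast hle
        _ = 2 * T.ncard := by push_cast; ring

end Toughness
end
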